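/- arXiv:math/0702537 — 5 statements merged into one kernel-verified Lean document; each statement's English description precedes it below -/
import Mathlib

section
/- Let 1 < p < ∞ and let a, b be real numbers. If 1 < p ≤ 2, then |a+b|^p ≤ |a|^p + p·|a|^{p-1}·sgn(a)·b + A·|b|^p for some positive constant A depending only on p (not on a, b). -/
open Real NNReal

private lemma real_rpow_add_le {α : ℝ} (hα : 0 < α) (hα1 : α ≤ 1) {u v : ℝ}
    (hu : 0 ≤ u) (hv : 0 ≤ v) : (u + v) ^ α ≤ u ^ α + v ^ α := by
  have h := NNReal.rpow_add_le_add_rpow u.toNNReal v.toNNReal hα.le hα1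
  calc (u + v) ^ α = ((u.toNNReal + v.toNNReal : ℝ≥0) : ℝ) ^ α := by
        rw [NNReal.coe_add, Real.coe_toNNReal _ hu, Real.coe_toNNReal _ hv]
    _ = (((u.toNNReal + v.toNNReal) ^ α : ℝ≥0) : ℝ) := (NNReal.coe_rpow _ _).symm
    _ ≤ ((u.toNNReal ^ α + v.toNNReal ^ α : ℝ≥0) : ℝ) := NNReal.coe_le_coe.2 h
    _ = u ^ α + v ^ α := by
        rw [NNReal.coe_add, NNReal.coe_rpow, NNReal.coe_rpow,
          Real.coe_toNNReal _ hu, Real.coe_toNNReal _ hv]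

private lemma sign_mul_abs_rpow {α : ℝ} (hα : 0 < α) {x : ℝ} (hx : 0 ≤ x) :
    Real.sign x * |x| ^ α = x ^ α := by
  rcases eq_or_lt_of_le hx with h | h
  · simp [← h, Real.sign_zero, Real.zero_rpow hα.ne']
  · rw [Real.sign_of_pos h, abs_of_pos h, one_mul]

/-- Hölder continuity of `x ↦ sign x * |x|^α` for `0 < α ≤ 1`, with constant `2`. -/
private lemma sgn_rpow_holder {α : ℝ} (hα : 0 < α) (hα1 : α ≤ 1) (x y : ℝ) :
    |Real.sign x * |x| ^ α - Real.sign y * |y| ^ α| ≤ 2 * |x - y| ^ α := by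
  wlog hxy : y ≤ x generalizing x y
  · have h := this y x (le_of_not_ge hxy)
    have h2 : |x - y| = |y - x| := abs_sub_comm x y
    rw [abs_sub_comm, h2]
    exact h
  have key : ∀ u v : ℝ, 0 ≤ v → v ≤ u →
      Real.sign u * |u| ^ α - Real.sign v * |v| ^ α ≤ 2 * |u - v| ^ α := by
    intro u v hv hvu
    rw [sign_mul_abs_rpow hα hv, sign_mul_abs_rpow hα (hv.trans hvu)]
    have h1 : u ^ α ≤ (u - v) ^ α + v ^ α := by
      have h0 := real_rpow_add_le hα hα1 (by linarith : (0:ℝ) ≤ u - v) hv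
      rwa [sub_add_cancel] at h0
    have h2 : (0:ℝ) ≤ (u - v) ^ α := Real.rpow_nonneg (by linarith) _
    rw [abs_of_nonneg (by linarith : (0:ℝ) ≤ u - v)]
    linarith
  rcases le_or_gt 0 y with hy | hy
  · -- 0 ≤ y ≤ x
    have h := key x y hy hxy
    have hmono : Real.sign y * |y| ^ α ≤ Real.sign x * |x| ^ α := by
      rw [sign_mul_abs_rpow hα hy, sign_mul_abs_rpow hα (hy.trans hxy)]
      exact Real.rpow_le_rpow hy hxy hα.le
    rw [abs_of_nonneg (by linarith)]
    exact h
  rcases le_or_gt x 0 with hx | hx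
  · -- y ≤ x ≤ 0 : use negation symmetry
    have h := key (-y) (-x) (by linarith) (by linarith)
    rw [Real.sign_neg, Real.sign_neg, abs_neg, abs_neg] at h
    have he : -y - -x = x - y := by ring
    rw [he] at h
    have hx' := sign_mul_abs_rpow hα (by linarith : (0:ℝ) ≤ -x)
    have hy' := sign_mul_abs_rpow hα (by linarith : (0:ℝ) ≤ -y)
    rw [Real.sign_neg, abs_neg] at hx' hy'
    have hmo : (-x) ^ α ≤ (-y) ^ α := Real.rpow_le_rpow (by linarith) (by linarith) hα.le
    have hmono : Real.sign y * |y| ^ α ≤ Real.sign x * |x| ^ α := by linarith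
    rw [abs_of_nonneg (by linarith)]
    linarith
  · -- y < 0 < x
    have hx' : Real.sign x * |x| ^ α = x ^ α := sign_mul_abs_rpow hα hx.le
    have hy' : Real.sign (-y) * |(-y)| ^ α = (-y) ^ α := sign_mul_abs_rpow hα (by linarith)
    rw [Real.sign_neg, abs_neg] at hy'
    have hxa : x ^ α ≤ (x - y) ^ α := Real.rpow_le_rpow hx.le (by linarith) hα.le
    have hya : (-y) ^ α ≤ (x - y) ^ α := Real.rpow_le_rpow (by linarith) (by linarith) hα.le
    have habs : |x - y| = x - y := abs_of_pos (by linarith)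
    rw [habs]
    have h0 : Real.sign x * |x| ^ α - Real.sign y * |y| ^ α = x ^ α + (-y) ^ α := by
      rw [hx']; nlinarith [hy']
    rw [h0, abs_of_nonneg (add_nonneg (Real.rpow_nonneg hx.le _)
      (Real.rpow_nonneg (by linarith) _))]
    linarith

private lemma my_hasDerivAt_abs_rpow {p : ℝ} (hp : 1 < p) (x : ℝ) :
    HasDerivAt (fun t : ℝ => |t| ^ p) (p * Real.sign x * |x| ^ (p - 1)) x := by
  have h := hasDerivAt_abs_rpow x hp
  convert h using 1
  rcases lt_trichotomy x 0 with hx | hx | hx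
  · rw [Real.sign_of_neg hx, abs_of_neg hx]
    rw [show p - 1 = (p - 2) + 1 by ring, Real.rpow_add_one (by linarith : (0:ℝ) < -x).ne']
    ring
  · subst hx; simp
  · rw [Real.sign_of_pos hx, abs_of_pos hx]
    rw [show p - 1 = (p - 2) + 1 by ring, Real.rpow_add_one hx.ne']
    ring

/-- Banach–Saks pointwise inequality, case `1 < p ≤ 2`. -/
theorem stmt_0 (p : ℝ) (hp1 : 1 < p) (hp2 : p ≤ 2) :
    ∃ A : ℝ, 0 < A ∧ ∀ a b : ℝ,
      |a + b| ^ p ≤ |a| ^ p + p * |a| ^ (p - 1) * Real.sign a * b + A * |b| ^ p := by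
  refine ⟨2 * p, by linarith, fun a b => ?_⟩
  rcases eq_or_ne b 0 with rfl | hb
  · simp [Real.zero_rpow (by linarith : p ≠ 0)]
  have hb' : (0:ℝ) < |b| := abs_pos.2 hb
  set d : ℝ → ℝ := fun x => p * Real.sign x * |x| ^ (p - 1) with hd
  set s : Set ℝ := Set.Icc (min a (a + b)) (max a (a + b)) with hs
  have hconv : Convex ℝ s := convex_Icc _ _
  have has : a ∈ s := ⟨min_le_left _ _, le_max_left _ _⟩
  have habs : a + b ∈ s := ⟨min_le_right _ _, le_max_right _ _⟩
  have hderiv : ∀ x ∈ s, HasFDerivWithinAt (fun t : ℝ => |t| ^ p)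
      (ContinuousLinearMap.smulRight (1 : ℝ →L[ℝ] ℝ) (d x)) s x := fun x _ =>
    (my_hasDerivAt_abs_rpow hp1 x).hasFDerivAt.hasFDerivWithinAt
  have hbound : ∀ x ∈ s,
      ‖ContinuousLinearMap.smulRight (1 : ℝ →L[ℝ] ℝ) (d x) -
        ContinuousLinearMap.smulRight (1 : ℝ →L[ℝ] ℝ) (d a)‖ ≤ 2 * p * |b| ^ (p - 1) := by
    intro x hx
    have heq : ContinuousLinearMap.smulRight (1 : ℝ →L[ℝ] ℝ) (d x) -
        ContinuousLinearMap.smulRight (1 : ℝ →L[ℝ] ℝ) (d a) =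
        ContinuousLinearMap.smulRight (1 : ℝ →L[ℝ] ℝ) (d x - d a) := by
      ext; simp [smul_sub]
    rw [heq, ContinuousLinearMap.norm_smulRight_apply, norm_one, one_mul,
      Real.norm_eq_abs]
    have hfac : d x - d a = p * (Real.sign x * |x| ^ (p - 1) - Real.sign a * |a| ^ (p - 1)) := by
      rw [hd]; ring
    rw [hfac, abs_mul, abs_of_pos (by linarith : (0:ℝ) < p)]
    have h1 : |Real.sign x * |x| ^ (p - 1) - Real.sign a * |a| ^ (p - 1)| ≤
        2 * |x - a| ^ (p - 1) := sgn_rpow_holder (by linarith) (by linarith) x a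
    have hxa : |x - a| ≤ |b| := by
      rcases hx with ⟨h1', h2'⟩
      rw [abs_le]
      rcases le_total 0 b with hb0 | hb0
      · have hmn : min a (a + b) = a := min_eq_left (by linarith)
        have hmx : max a (a + b) = a + b := max_eq_right (by linarith)
        rw [hmn] at h1'; rw [hmx] at h2'
        constructor
        · linarith [abs_nonneg b]
        · linarith [le_abs_self b]
      · have hmn : min a (a + b) = a + b := min_eq_right (by linarith)
        have hmx : max a (a + b) = a := max_eq_left (by linarith)
        rw [hmn] at h1'; rw [hmx] at h2'
        constructor
        · linarith [neg_abs_le b]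
        · linarith [abs_nonneg b]
    have h2 : |x - a| ^ (p - 1) ≤ |b| ^ (p - 1) :=
      Real.rpow_le_rpow (abs_nonneg _) hxa (by linarith)
    calc p * |Real.sign x * |x| ^ (p - 1) - Real.sign a * |a| ^ (p - 1)|
        ≤ p * (2 * |x - a| ^ (p - 1)) := mul_le_mul_of_nonneg_left h1 (by linarith)
      _ ≤ p * (2 * |b| ^ (p - 1)) := mul_le_mul_of_nonneg_left (by linarith) (by linarith)
      _ = 2 * p * |b| ^ (p - 1) := by ring
  have hmvt := hconv.norm_image_sub_le_of_norm_hasFDerivWithin_le' hderiv hbound has habs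
  have hφ : (ContinuousLinearMap.smulRight (1 : ℝ →L[ℝ] ℝ) (d a)) (a + b - a) = d a * b := by
    simp [mul_comm]
  rw [hφ, Real.norm_eq_abs] at hmvt
  have hnb : ‖a + b - a‖ = |b| := by rw [Real.norm_eq_abs]; congr 1; ring
  rw [hnb] at hmvt
  have hkey : |a + b| ^ p - |a| ^ p - d a * b ≤ 2 * p * |b| ^ (p - 1) * |b| :=
    (le_abs_self _).trans hmvt
  have hpow : |b| ^ (p - 1) * |b| = |b| ^ p := by
    rw [← Real.rpow_add_one hb'.ne' (p - 1)]; ring_nf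
  have hda : d a * b = p * |a| ^ (p - 1) * Real.sign a * b := by rw [hd]; ring
  nlinarith [hkey, hpow, hda]
end

section
/- Let 2 < p < ∞ and let a, b be real numbers. Then |a+b|^p ≤ |a|^p + p·|a|^{p-1}·sgn(a)·b + A·|b|^p + Σ_{i=2}^{E(p)} (p choose i)·|a|^{p-i}·|b|^i, where E(p) is the largest natural number strictly less than p, (p choose i) denotes the generalized binomial coefficient p(p-1)⋯(p-i+1)/i!, and A is a positive constant depending only on p. -/
/-!
By the binomial series, `(1 + x)^p = ∑_{i < ⌈p⌉} (p choose i) x^i + O(|x|^⌈p⌉)` uniformly on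
`|x| < 1/2`, and there `|x|^⌈p⌉ ≤ |x|^p`. The coefficients `(p choose i)` with `i ≤ E(p)` are
nonnegative, so `x^i` may be replaced by `|x|^i`. Both sides of the inequality are positively
homogeneous of degree `p` in `(a, b)` and invariant under `(a, b) ↦ (-a, -b)`, which reduces the
range `2|b| < |a|` to `a = 1`. For `|a| ≤ 2|b|` every term is `O(|b|^p)`, and the only negative
one is `p |a|^(p-1) sgn(a) b ≥ -p 2^(p-1) |b|^p`.
-/

open Finset

theorem Ring.choose_eq_prod_div {K : Type*} [Field K] [CharZero K] (a : K) (n : ℕ) :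
    Ring.choose a n = (∏ j ∈ range n, (a - j)) / n.factorial := by
  rw [Ring.choose_eq_smul, ← Polynomial.aeval_eq_smeval, Polynomial.aeval_def,
    Polynomial.eval₂_eq_eval_map, descPochhammer_map, descPochhammer_eval_eq_prod_range,
    smul_eq_mul, inv_mul_eq_div]

theorem Ring.choose_nonneg_of_le_add_one {a : ℝ} {n : ℕ} (h : (n : ℝ) ≤ a + 1) :
    0 ≤ Ring.choose a n := by
  rw [Ring.choose_eq_prod_div]
  refine div_nonneg (prod_nonneg fun j hj => ?_) (by positivity)
  have : (j : ℝ) + 1 ≤ n := by exact_mod_cast mem_range.1 hj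
  linarith

theorem binomialSeries_partialSum {𝕂 : Type*} [Field 𝕂] [CharZero 𝕂] [TopologicalSpace 𝕂]
    [IsTopologicalRing 𝕂] (a x : 𝕂) (n : ℕ) :
    (binomialSeries 𝕂 a).partialSum n x = ∑ i ∈ range n, Ring.choose a i * x ^ i := by
  simp [FormalMultilinearSeries.partialSum, binomialSeries, FormalMultilinearSeries.ofScalars]

theorem HasFPowerSeriesOnBall.exists_norm_sub_partialSum_le {𝕜 E F : Type*}
    [NontriviallyNormedField 𝕜] [NormedAddCommGroup E] [NormedSpace 𝕜 E] [NormedAddCommGroup F]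
    [NormedSpace 𝕜 F] {f : E → F} {pf : FormalMultilinearSeries 𝕜 E F} {x : E} {r : ENNReal}
    {r' : NNReal} (hf : HasFPowerSeriesOnBall f pf x r) (h : (r' : ENNReal) < r) (n : ℕ) :
    ∃ K, ∀ y, ‖y‖ < r' → ‖f (x + y) - pf.partialSum n y‖ ≤ K * ‖y‖ ^ n := by
  obtain ⟨a, -, C, -, hC⟩ := hf.uniform_geometric_approx' h
  refine ⟨C * (a / r') ^ n, fun y hy => (hC y (mem_ball_zero_iff.2 hy) n).trans_eq ?_⟩
  ring

theorem Real.exists_abs_one_add_rpow_sub_sum_choose_le (a : ℝ) (n : ℕ) :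
    ∃ K, ∀ x : ℝ, |x| < 1 / 2 →
      |(1 + x) ^ a - ∑ i ∈ range n, Ring.choose a i * x ^ i| ≤ K * |x| ^ n := by
  obtain ⟨K, hK⟩ := Real.one_add_rpow_hasFPowerSeriesOnBall_zero.exists_norm_sub_partialSum_le
    (r' := 1 / 2) (by norm_num) n
  refine ⟨K, fun x hx => ?_⟩
  simpa [binomialSeries_partialSum] using hK x (by simpa using hx)

theorem Ring.choose_nonneg_of_le_ceil_sub_one {p : ℝ} (hp : 0 < p) {i : ℕ}
    (hi : i ≤ ⌈p⌉₊ - 1) : 0 ≤ Ring.choose p i := by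
  have : 0 < ⌈p⌉₊ := Nat.ceil_pos.2 hp
  have : (i : ℝ) < p := Nat.lt_ceil.1 (by omega)
  exact Ring.choose_nonneg_of_le_add_one (by linarith)

theorem Real.abs_sign_le_one (r : ℝ) : |Real.sign r| ≤ 1 := by
  rcases Real.sign_apply_eq r with h | h | h <;> simp [h]

noncomputable def banachSaksMajorant (p A a b : ℝ) : ℝ :=
  |a| ^ p + p * |a| ^ (p - 1) * Real.sign a * b + A * |b| ^ p +
    ∑ i ∈ Icc 2 (⌈p⌉₊ - 1), Ring.choose p i * |a| ^ (p - i) * |b| ^ (i : ℝ)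

theorem banachSaksMajorant_neg_neg (p A a b : ℝ) :
    banachSaksMajorant p A (-a) (-b) = banachSaksMajorant p A a b := by
  simp [banachSaksMajorant, Real.sign_neg]

theorem banachSaksMajorant_mul_mul (p A a b : ℝ) {t : ℝ} (ht : 0 < t) :
    banachSaksMajorant p A (t * a) (t * b) = t ^ p * banachSaksMajorant p A a b := by
  have hsub : ∀ s : ℝ, t ^ (p - s) * t ^ s = t ^ p := fun s => by
    rw [← Real.rpow_add ht, sub_add_cancel]
  have hsign : Real.sign (t * a) = Real.sign a := by
    rcases lt_trichotomy a 0 with h | rfl | h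
    · rw [Real.sign_of_neg h, Real.sign_of_neg (mul_neg_of_pos_of_neg ht h)]
    · simp
    · rw [Real.sign_of_pos h, Real.sign_of_pos (mul_pos ht h)]
  simp only [banachSaksMajorant, abs_mul, abs_of_pos ht, Real.mul_rpow ht.le (abs_nonneg _),
    hsign, mul_add, mul_sum]
  congr 1
  · have := hsub 1
    rw [Real.rpow_one] at this
    linear_combination p * |a| ^ (p - 1) * Real.sign a * b * this
  · refine sum_congr rfl fun i _ => ?_
    linear_combination Ring.choose p i * |a| ^ (p - i) * |b| ^ (i : ℝ) * hsub i

theorem banachSaksMajorant_one (p A x : ℝ) :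
    banachSaksMajorant p A 1 x =
      1 + p * x + A * |x| ^ p + ∑ i ∈ Icc 2 (⌈p⌉₊ - 1), Ring.choose p i * |x| ^ i := by
  simp [banachSaksMajorant]

theorem exists_one_add_rpow_le_banachSaksMajorant_one {p : ℝ} (hp : 1 < p) :
    ∃ K, ∀ A, K ≤ A → 0 ≤ A →
      ∀ x : ℝ, |x| < 1 / 2 → (1 + x) ^ p ≤ banachSaksMajorant p A 1 x := by
  obtain ⟨K, hK⟩ := Real.exists_abs_one_add_rpow_sub_sum_choose_le p ⌈p⌉₊
  refine ⟨K, fun A hKA hA x hx => ?_⟩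
  have hceil : 2 ≤ ⌈p⌉₊ := Nat.lt_ceil.2 (by exact_mod_cast hp)
  have hsplit : ∑ i ∈ range ⌈p⌉₊, Ring.choose p i * x ^ i =
      1 + p * x + ∑ i ∈ Icc 2 (⌈p⌉₊ - 1), Ring.choose p i * x ^ i := by
    have hIco : Ico 2 ⌈p⌉₊ = Icc 2 (⌈p⌉₊ - 1) := by ext; simp; omega
    rw [← sum_range_add_sum_Ico _ hceil, hIco]
    simp [sum_range_succ]
  have hsum : ∑ i ∈ Icc 2 (⌈p⌉₊ - 1), Ring.choose p i * x ^ i ≤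
      ∑ i ∈ Icc 2 (⌈p⌉₊ - 1), Ring.choose p i * |x| ^ i :=
    sum_le_sum fun i hi => mul_le_mul_of_nonneg_left ((le_abs_self _).trans (abs_pow x i).le)
      (Ring.choose_nonneg_of_le_ceil_sub_one (by linarith) (mem_Icc.1 hi).2)
  have hpow : |x| ^ ⌈p⌉₊ ≤ |x| ^ p := by
    rw [← Real.rpow_natCast]
    exact Real.rpow_le_rpow_of_exponent_ge' (abs_nonneg x) (by linarith) (by linarith)
      (Nat.le_ceil p)
  have hrem : K * |x| ^ ⌈p⌉₊ ≤ A * |x| ^ p :=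
    (mul_le_mul_of_nonneg_right hKA (by positivity)).trans (mul_le_mul_of_nonneg_left hpow hA)
  rw [banachSaksMajorant_one]
  linarith [(abs_le.1 (hK x hx)).2]

theorem abs_add_rpow_le_banachSaksMajorant_of_two_mul_lt {p A : ℝ}
    (h1 : ∀ x : ℝ, |x| < 1 / 2 → (1 + x) ^ p ≤ banachSaksMajorant p A 1 x) {a b : ℝ}
    (hab : 2 * |b| < |a|) : |a + b| ^ p ≤ banachSaksMajorant p A a b := by
  wlog ha : 0 < a generalizing a b
  · have ha' : a ≠ 0 := by rintro rfl; linarith [abs_nonneg b, abs_zero (α := ℝ)]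
    have := this (a := -a) (b := -b) (by simpa using hab) (by grind)
    rwa [banachSaksMajorant_neg_neg, ← neg_add, abs_neg] at this
  have hx : |b / a| < 1 / 2 := by
    rw [abs_div, abs_of_pos ha, div_lt_iff₀ ha]
    rw [abs_of_pos ha] at hab
    linarith
  have h1x : 0 < 1 + b / a := by linarith [neg_abs_le (b / a)]
  calc |a + b| ^ p = a ^ p * (1 + b / a) ^ p := by
        rw [show a + b = a * (1 + b / a) by field_simp, abs_of_pos (mul_pos ha h1x),
          Real.mul_rpow ha.le h1x.le]
    _ ≤ a ^ p * banachSaksMajorant p A 1 (b / a) := by gcongr; exact h1 _ hx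
    _ = banachSaksMajorant p A a b := by
        rw [← banachSaksMajorant_mul_mul _ _ _ _ ha, mul_one, mul_div_cancel₀ _ ha.ne']

theorem abs_add_rpow_le_banachSaksMajorant_of_le_two_mul {p A a b : ℝ} (hp : 1 < p)
    (hA : 3 ^ p + p * 2 ^ (p - 1) ≤ A) (hab : |a| ≤ 2 * |b|) :
    |a + b| ^ p ≤ banachSaksMajorant p A a b := by
  have hb : 0 ≤ |b| := abs_nonneg b
  have hlhs : |a + b| ^ p ≤ 3 ^ p * |b| ^ p := by
    rw [← Real.mul_rpow (by norm_num) hb]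
    exact Real.rpow_le_rpow (abs_nonneg _) (by linarith [abs_add_le a b]) (by linarith)
  have hlin : -(p * 2 ^ (p - 1) * |b| ^ p) ≤ p * |a| ^ (p - 1) * Real.sign a * b := by
    have hpow : |a| ^ (p - 1) ≤ 2 ^ (p - 1) * |b| ^ (p - 1) := by
      rw [← Real.mul_rpow (by norm_num) hb]
      exact Real.rpow_le_rpow (abs_nonneg a) hab (by linarith)
    have hsign : |Real.sign a * b| ≤ |b| := by
      rw [abs_mul]
      exact mul_le_of_le_one_left hb (Real.abs_sign_le_one a)
    have hbp : |b| ^ p = |b| ^ (p - 1) * |b| := by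
      rw [← Real.rpow_add_one' hb (by linarith), sub_add_cancel]
    have hcoef : 0 ≤ p * |a| ^ (p - 1) := by positivity
    calc -(p * 2 ^ (p - 1) * |b| ^ p) = -(p * (2 ^ (p - 1) * |b| ^ (p - 1)) * |b|) := by
          rw [hbp]; ring
      _ ≤ -(p * |a| ^ (p - 1) * |b|) :=
          neg_le_neg <| mul_le_mul_of_nonneg_right
            (mul_le_mul_of_nonneg_left hpow (by linarith)) hb
      _ ≤ -(p * |a| ^ (p - 1) * |Real.sign a * b|) :=
          neg_le_neg (mul_le_mul_of_nonneg_left hsign hcoef)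
      _ ≤ p * |a| ^ (p - 1) * Real.sign a * b := by
          rw [mul_assoc _ (Real.sign a)]
          nlinarith [neg_abs_le (Real.sign a * b)]
  have hsum : 0 ≤ ∑ i ∈ Icc 2 (⌈p⌉₊ - 1), Ring.choose p i * |a| ^ (p - i) * |b| ^ (i : ℝ) :=
    sum_nonneg fun i hi => mul_nonneg (mul_nonneg
      (Ring.choose_nonneg_of_le_ceil_sub_one (by linarith) (mem_Icc.1 hi).2) (by positivity))
      (by positivity)
  have hA' : (3 ^ p + p * 2 ^ (p - 1)) * |b| ^ p ≤ A * |b| ^ p :=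
    mul_le_mul_of_nonneg_right hA (by positivity)
  have : 0 ≤ |a| ^ p := by positivity
  unfold banachSaksMajorant
  linarith

/-- Banach–Saks pointwise inequality, case `p > 2`.  Here `E(p) = ⌈p⌉₊ - 1` is the largest
natural number strictly less than `p`, and the generalized binomial coefficient
`(p choose i) = p (p-1) ⋯ (p-i+1) / i!` appears in the correction term. -/
theorem stmt_1 (p : ℝ) (hp : 2 < p) :
    ∃ A : ℝ, 0 < A ∧ ∀ a b : ℝ,
      |a + b| ^ p ≤ |a| ^ p + p * |a| ^ (p - 1) * Real.sign a * b + A * |b| ^ p +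
        ∑ i ∈ Finset.Icc 2 (⌈p⌉₊ - 1),
          ((∏ j ∈ Finset.range i, (p - j)) / (Nat.factorial i)) *
            |a| ^ (p - i) * |b| ^ (i : ℝ) := by
  have hp1 : 1 < p := by linarith
  obtain ⟨K, hK⟩ := exists_one_add_rpow_le_banachSaksMajorant_one hp1
  set A := max K (3 ^ p + p * 2 ^ (p - 1))
  have hA : 0 < A := lt_max_of_lt_right (by positivity)
  refine ⟨A, hA, fun a b => ?_⟩
  simp_rw [← Ring.choose_eq_prod_div]
  rcases lt_or_ge (2 * |b|) |a| with hab | hab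
  · exact abs_add_rpow_le_banachSaksMajorant_of_two_mul_lt (hK A (le_max_left _ _) hA.le) hab
  · exact abs_add_rpow_le_banachSaksMajorant_of_le_two_mul hp1 (le_max_right _ _) hab
end

section
/- Let 1 < p < ∞ and let (û_i) be a sequence in L^p(ℝ^n, μ) (μ a nonnegative measure) with ∫|û_i|^p dμ ≤ 1 for all i ≥ 1. Set ŝ_k = û_1 + ⋯ + û_k. Then there exist positive constants A and B depending only on p (independent of k and the sequence) such that for all k ≥ 2: ∫|ŝ_k|^p dμ ≤ (A + B·k^{p-2}) + p·∫ |ŝ_{k-1}|^{p-1} sgn(ŝ_{k-1}) û_k dμ + ∫ |ŝ_{k-1}|^p dμ. -/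
open Real MeasureTheory Finset

/-!
Let `S = signPow (p - 1)`, i.e. `S(t) = sign t · |t|^(p-1)`, the derivative of `t ↦ |t|^p / p`.
The tangent-line inequality for the convex function `|t|^p` at `a + b` gives
`|a + b|^p ≤ |a|^p + p S(a) b + p |b| |S(a + b) - S(a)|`.
For `p ≤ 2` the map `S` is `(p-1)`-Hölder, so the error is `O(|b|^p)`; for `p ≥ 2` it is locally
Lipschitz, so the error is `O((|a| + |b|)^(p-2) b²)`, which Young's inequality at scale `R` splits
into `O(|a|^p / R² + R^(p-2) |b|^p)`. Take `a = ŝ_{k-1}`, `b = û_k`, `R = k`, integrate, and use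
`∫ |ŝ_{k-1}|^p ≤ (k-1)^p`, which follows from the convexity of `t^p` on the `k-1` summands.
-/

noncomputable def signPow (r x : ℝ) : ℝ := |x| ^ r * Real.sign x

lemma signPow_of_pos {x : ℝ} (r : ℝ) (hx : 0 < x) : signPow r x = x ^ r := by
  simp [signPow, abs_of_pos hx, Real.sign_of_pos hx]

lemma signPow_of_nonneg {r x : ℝ} (hr : 0 < r) (hx : 0 ≤ x) : signPow r x = x ^ r := by
  rcases hx.eq_or_lt with rfl | hx
  · simp [signPow, zero_rpow hr.ne']
  · exact signPow_of_pos r hx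

lemma signPow_neg (r x : ℝ) : signPow r (-x) = -signPow r x := by
  simp [signPow, Real.sign_neg]

lemma abs_signPow (r x : ℝ) : |signPow r x| ≤ |x| ^ r := by
  rw [signPow, abs_mul, abs_of_nonneg (rpow_nonneg (abs_nonneg x) r)]
  rcases Real.sign_apply_eq x with h | h | h <;> simp [h, rpow_nonneg]

lemma rpow_eq_rpow_sub_one_mul {x r : ℝ} (hx : 0 ≤ x) (hr : r ≠ 0) : x ^ r = x ^ (r - 1) * x := by
  simpa using rpow_add_one' hx (y := r - 1) (by simpa using hr)

lemma abs_rpow_add_mul_signPow_le {q : ℝ} (hq : 1 ≤ q) (x y : ℝ) :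
    |x| ^ q + q * signPow (q - 1) x * (y - x) ≤ |y| ^ q := by
  wlog hx : 0 ≤ x generalizing x y
  · have h := this (-x) (-y) (by linarith)
    rw [signPow_neg, abs_neg, abs_neg] at h
    convert h using 2
    ring
  rcases hx.eq_or_lt with rfl | hx
  · simp [signPow, zero_rpow (by positivity : q ≠ 0), rpow_nonneg]
  have hxq : x ^ (q - 1) * x = x ^ q := (rpow_eq_rpow_sub_one_mul hx.le (by positivity)).symm
  rw [abs_of_pos hx, signPow_of_pos _ hx]
  rcases le_or_gt 0 y with hy | hy
  · have h := one_add_mul_self_le_rpow_one_add (s := y / x - 1)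
      (by linarith [div_nonneg hy hx.le]) hq
    rw [add_sub_cancel, div_rpow hy hx.le, le_div_iff₀ (rpow_pos_of_pos hx q)] at h
    rw [abs_of_nonneg hy]
    calc x ^ q + q * x ^ (q - 1) * (y - x) = (1 + q * (y / x - 1)) * x ^ q := by
          rw [← hxq]; field_simp
      _ ≤ y ^ q := h
  · have h : x ^ (q - 1) * (y - x) ≤ -x ^ q := by
      rw [← hxq, ← mul_neg]
      exact mul_le_mul_of_nonneg_left (by linarith) (rpow_nonneg hx.le _)
    nlinarith [rpow_nonneg hx.le q, rpow_nonneg (abs_nonneg y) q]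

lemma abs_signPow_sub_le_of_cases {r : ℝ} (hr : 0 < r) {F : ℝ → ℝ → ℝ → ℝ}
    (hF : ∀ a b c, F a b c = F b a c)
    (same_sign : ∀ x y, 0 ≤ y → y ≤ x → x ^ r - y ^ r ≤ F x y (x - y))
    (opposite_sign : ∀ x y, 0 ≤ x → 0 ≤ y → x ^ r + y ^ r ≤ F x y (x + y)) (x y : ℝ) :
    |signPow r x - signPow r y| ≤ F |x| |y| |x - y| := by
  wlog hyx : y ≤ x generalizing x y
  · rw [abs_sub_comm, abs_sub_comm x, hF]
    exact this y x (by linarith)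
  wlog hx : 0 ≤ x generalizing x y
  · have h := this (-y) (-x) (by linarith) (by linarith)
    rwa [signPow_neg, signPow_neg, neg_sub_neg, abs_neg, abs_neg, neg_sub_neg, hF] at h
  rw [abs_of_nonneg hx, abs_of_nonneg (sub_nonneg.2 hyx), signPow_of_nonneg hr hx]
  rcases le_total 0 y with hy | hy
  · rw [abs_of_nonneg hy, signPow_of_nonneg hr hy,
      abs_of_nonneg (sub_nonneg.2 (rpow_le_rpow hy hyx hr.le))]
    exact same_sign x y hy hyx
  · have hy' : signPow r y = -(-y) ^ r := by
      rw [← signPow_of_nonneg hr (neg_nonneg.2 hy), signPow_neg, neg_neg]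
    rw [abs_of_nonpos hy, hy', sub_neg_eq_add, sub_eq_add_neg x y,
      abs_of_nonneg (add_nonneg (rpow_nonneg hx _) (rpow_nonneg (neg_nonneg.2 hy) _))]
    exact opposite_sign x (-y) hx (neg_nonneg.2 hy)

lemma abs_signPow_sub_le_two_mul_rpow {r : ℝ} (hr0 : 0 < r) (hr1 : r ≤ 1) (x y : ℝ) :
    |signPow r x - signPow r y| ≤ 2 * |x - y| ^ r := by
  refine abs_signPow_sub_le_of_cases hr0 (F := fun _ _ c => 2 * c ^ r) (fun _ _ _ => rfl)
    (fun x y hy hyx => ?_) (fun x y hx hy => ?_) x y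
  · have h := rpow_add_le_add_rpow (sub_nonneg.2 hyx) hy hr0.le hr1
    rw [sub_add_cancel] at h
    linarith [rpow_nonneg (sub_nonneg.2 hyx) r]
  · linarith [rpow_le_rpow hx (le_add_of_nonneg_right hy) hr0.le,
      rpow_le_rpow hy (le_add_of_nonneg_left hx) hr0.le]

lemma abs_signPow_sub_le_mul_max_rpow {r : ℝ} (hr : 1 ≤ r) (x y : ℝ) :
    |signPow r x - signPow r y| ≤ r * max |x| |y| ^ (r - 1) * |x - y| := by
  have hr0 : 0 < r := by linarith
  refine abs_signPow_sub_le_of_cases hr0 (F := fun a b c => r * max a b ^ (r - 1) * c)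
    (fun a b c => by rw [max_comm]) (fun x y hy hyx => ?_) (fun x y hx hy => ?_) x y
  · rcases (hy.trans hyx).eq_or_lt with rfl | hx
    · simp [le_antisymm hyx hy]
    have h := abs_rpow_add_mul_signPow_le hr x y
    rw [abs_of_pos hx, abs_of_nonneg hy, signPow_of_pos _ hx] at h
    simp only [max_eq_left hyx]
    linarith
  · have hm : 0 ≤ max x y ^ (r - 1) := rpow_nonneg (hx.trans (le_max_left x y)) _
    have key : ∀ t, 0 ≤ t → t ≤ max x y → t ^ r ≤ max x y ^ (r - 1) * t := fun t ht htm => by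
      rw [rpow_eq_rpow_sub_one_mul ht hr0.ne']
      exact mul_le_mul_of_nonneg_right (rpow_le_rpow ht htm (by linarith)) ht
    have hx' := key x hx (le_max_left x y)
    have hy' := key y hy (le_max_right x y)
    nlinarith [mul_nonneg (mul_nonneg (sub_nonneg.2 hr) hm) (add_nonneg hx hy)]

lemma abs_add_rpow_le_add_mul_abs_signPow_sub {p : ℝ} (hp : 1 ≤ p) (a b : ℝ) :
    |a + b| ^ p ≤ |a| ^ p + p * signPow (p - 1) a * b
      + p * |b| * |signPow (p - 1) (a + b) - signPow (p - 1) a| := by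
  have h := abs_rpow_add_mul_signPow_le hp (a + b) a
  have h' : b * (signPow (p - 1) (a + b) - signPow (p - 1) a)
      ≤ |b| * |signPow (p - 1) (a + b) - signPow (p - 1) a| := by
    rw [← abs_mul]; exact le_abs_self _
  rw [show a - (a + b) = -b by ring] at h
  nlinarith [mul_le_mul_of_nonneg_left h' (by linarith : 0 ≤ p)]

lemma abs_add_rpow_le_of_le_two {p : ℝ} (hp : 1 < p) (hp2 : p ≤ 2) (a b : ℝ) :
    |a + b| ^ p ≤ |a| ^ p + p * signPow (p - 1) a * b + 2 * p * |b| ^ p := by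
  have h := abs_signPow_sub_le_two_mul_rpow (r := p - 1) (by linarith) (by linarith) (a + b) a
  rw [add_sub_cancel_left] at h
  have hb : |b| * |b| ^ (p - 1) = |b| ^ p := by
    rw [rpow_eq_rpow_sub_one_mul (r := p) (abs_nonneg b) (by positivity), mul_comm]
  calc |a + b| ^ p ≤ |a| ^ p + p * signPow (p - 1) a * b
        + p * |b| * |signPow (p - 1) (a + b) - signPow (p - 1) a| :=
        abs_add_rpow_le_add_mul_abs_signPow_sub hp.le a b
    _ ≤ |a| ^ p + p * signPow (p - 1) a * b + p * |b| * (2 * |b| ^ (p - 1)) := by gcongr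
    _ = |a| ^ p + p * signPow (p - 1) a * b + 2 * p * |b| ^ p := by rw [← hb]; ring

lemma abs_add_rpow_le_of_two_le {p : ℝ} (hp : 2 ≤ p) (a b : ℝ) :
    |a + b| ^ p ≤ |a| ^ p + p * signPow (p - 1) a * b
      + p * (p - 1) * (|a| + |b|) ^ (p - 2) * |b| ^ 2 := by
  have h := abs_signPow_sub_le_mul_max_rpow (r := p - 1) (by linarith) (a + b) a
  rw [add_sub_cancel_left, show p - 1 - 1 = p - 2 by ring] at h
  have hmax : max |a + b| |a| ^ (p - 2) ≤ (|a| + |b|) ^ (p - 2) :=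
    rpow_le_rpow (by positivity)
      (max_le (abs_add_le a b) (le_add_of_nonneg_right (abs_nonneg b))) (by linarith)
  calc |a + b| ^ p ≤ |a| ^ p + p * signPow (p - 1) a * b
        + p * |b| * |signPow (p - 1) (a + b) - signPow (p - 1) a| :=
        abs_add_rpow_le_add_mul_abs_signPow_sub (by linarith) a b
    _ ≤ |a| ^ p + p * signPow (p - 1) a * b
        + p * |b| * ((p - 1) * (|a| + |b|) ^ (p - 2) * |b|) := by
        gcongr
        exact h.trans (by gcongr; linarith)
    _ = |a| ^ p + p * signPow (p - 1) a * b
        + p * (p - 1) * (|a| + |b|) ^ (p - 2) * |b| ^ 2 := by ring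

lemma rpow_mul_rpow_le_rpow_add_rpow {x y α β : ℝ} (hx : 0 ≤ x) (hy : 0 ≤ y) (hα : 0 ≤ α)
    (hβ : 0 ≤ β) : x ^ α * y ^ β ≤ x ^ (α + β) + y ^ (α + β) := by
  rcases le_total x y with hxy | hyx
  · calc x ^ α * y ^ β ≤ y ^ α * y ^ β := by gcongr
      _ ≤ x ^ (α + β) + y ^ (α + β) := by
        rw [← rpow_add_of_nonneg hy hα hβ]; linarith [rpow_nonneg hx (α + β)]
  · calc x ^ α * y ^ β ≤ x ^ α * x ^ β := by gcongr
      _ ≤ x ^ (α + β) + y ^ (α + β) := by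
        rw [← rpow_add_of_nonneg hx hα hβ]; linarith [rpow_nonneg hy (α + β)]

lemma rpow_sub_two_mul_sq_le {p w R : ℝ} (hp : 2 ≤ p) (hw : 0 ≤ w) (hR : 0 < R) (b : ℝ) :
    w ^ (p - 2) * |b| ^ 2 ≤ w ^ p / R ^ 2 + R ^ (p - 2) * |b| ^ p := by
  have h := rpow_mul_rpow_le_rpow_add_rpow (div_nonneg hw hR.le) (abs_nonneg b)
    (α := p - 2) (β := 2) (by linarith) zero_le_two
  rw [sub_add_cancel, rpow_two, div_rpow hw hR.le, div_rpow hw hR.le] at h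
  have hRp : R ^ p = R ^ (p - 2) * R ^ 2 := by
    rw [← rpow_natCast, ← rpow_add hR]; norm_num
  calc w ^ (p - 2) * |b| ^ 2 = R ^ (p - 2) * (w ^ (p - 2) / R ^ (p - 2) * |b| ^ 2) := by
        field_simp
    _ ≤ R ^ (p - 2) * (w ^ p / R ^ p + |b| ^ p) := by gcongr
    _ = w ^ p / R ^ 2 + R ^ (p - 2) * |b| ^ p := by rw [hRp]; field_simp

lemma add_rpow_le_two_rpow_mul_add {x y p : ℝ} (hx : 0 ≤ x) (hy : 0 ≤ y) (hp : 1 ≤ p) :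
    (x + y) ^ p ≤ 2 ^ (p - 1) * (x ^ p + y ^ p) := by
  lift x to NNReal using hx
  lift y to NNReal using hy
  exact_mod_cast NNReal.rpow_add_le_mul_rpow_add_rpow x y hp

lemma exists_abs_add_rpow_le {p : ℝ} (hp : 1 < p) :
    ∃ C, 0 < C ∧ ∀ R, 1 ≤ R → ∀ a b : ℝ, |a + b| ^ p ≤ |a| ^ p + p * signPow (p - 1) a * b
      + C * (|a| ^ p / R ^ 2 + (R ^ (p - 2) + 1) * |b| ^ p) := by
  rcases le_or_gt p 2 with hp2 | hp2
  · refine ⟨2 * p, by positivity, fun R hR a b => ?_⟩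
    have h := abs_add_rpow_le_of_le_two hp hp2 a b
    have hb : |b| ^ p ≤ |a| ^ p / R ^ 2 + (R ^ (p - 2) + 1) * |b| ^ p := by
      have : 0 ≤ R ^ (p - 2) * |b| ^ p := by positivity
      have : 0 ≤ |a| ^ p / R ^ 2 := by positivity
      linarith
    nlinarith
  · have hp1 : 0 < p - 1 := by linarith
    refine ⟨p * (p - 1) * 2 ^ (p - 1), by positivity, fun R hR a b => ?_⟩
    set A := |a| ^ p
    set B := |b| ^ p
    have h := abs_add_rpow_le_of_two_le hp2.le a b
    have hyoung := rpow_sub_two_mul_sq_le hp2.le (by positivity : 0 ≤ |a| + |b|)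
      (by linarith : 0 < R) b
    have hsum := add_rpow_le_two_rpow_mul_add (abs_nonneg a) (abs_nonneg b) hp.le
    have hK : 1 ≤ (2 : ℝ) ^ (p - 1) := one_le_rpow (by norm_num) (by linarith)
    have hR2 : 1 ≤ R ^ 2 := one_le_pow₀ hR
    have hB : B / R ^ 2 ≤ B := div_le_self (by positivity) hR2
    have hmain : (|a| + |b|) ^ p / R ^ 2 + R ^ (p - 2) * B
        ≤ 2 ^ (p - 1) * (A / R ^ 2 + (R ^ (p - 2) + 1) * B) := by
      calc (|a| + |b|) ^ p / R ^ 2 + R ^ (p - 2) * B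
          ≤ 2 ^ (p - 1) * (A + B) / R ^ 2 + R ^ (p - 2) * B := by gcongr
        _ = 2 ^ (p - 1) * (A / R ^ 2 + B / R ^ 2) + R ^ (p - 2) * B := by ring
        _ ≤ 2 ^ (p - 1) * (A / R ^ 2 + B) + 2 ^ (p - 1) * (R ^ (p - 2) * B) := by
          exact add_le_add (by gcongr) (le_mul_of_one_le_left (by positivity) hK)
        _ = 2 ^ (p - 1) * (A / R ^ 2 + (R ^ (p - 2) + 1) * B) := by ring
    have := mul_le_mul_of_nonneg_left (hyoung.trans hmain) (by positivity : 0 ≤ p * (p - 1))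
    linarith

lemma Real.measurable_sign : Measurable Real.sign :=
  Measurable.ite measurableSet_Iio measurable_const
    (Measurable.ite measurableSet_Ioi measurable_const measurable_const)

lemma measurable_signPow (r : ℝ) : Measurable (signPow r) :=
  (measurable_id.abs.pow_const r).mul Real.measurable_sign

section Integral

variable {α : Type*} [MeasurableSpace α] {μ : Measure α} {p : ℝ}

lemma MeasureTheory.MemLp.integrable_abs_rpow {f : α → ℝ} (hp : 0 < p)
    (hf : MemLp f (ENNReal.ofReal p) μ) :
    Integrable (fun x => |f x| ^ p) μ := by
  simpa [ENNReal.toReal_ofReal hp.le] using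
    hf.integrable_norm_rpow (by simpa using hp) ENNReal.ofReal_ne_top

lemma integrable_signPow_mul {s v : α → ℝ} (hp : 1 ≤ p) (hs : MemLp s (ENNReal.ofReal p) μ)
    (hv : MemLp v (ENNReal.ofReal p) μ) :
    Integrable (fun x => signPow (p - 1) (s x) * v x) μ := by
  refine ((hs.integrable_abs_rpow (by linarith)).add (hv.integrable_abs_rpow (by linarith))).mono'
    (((measurable_signPow _).comp_aemeasurable hs.1.aemeasurable).mul
      hv.1.aemeasurable).aestronglyMeasurable (ae_of_all _ fun x => ?_)
  have h := rpow_mul_rpow_le_rpow_add_rpow (abs_nonneg (s x)) (abs_nonneg (v x))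
    (α := p - 1) (β := 1) (by linarith) zero_le_one
  rw [sub_add_cancel, rpow_one] at h
  rw [norm_mul, Real.norm_eq_abs, Real.norm_eq_abs]
  exact (mul_le_mul_of_nonneg_right (abs_signPow _ _) (abs_nonneg _)).trans h

lemma integral_abs_add_rpow_le {C R : ℝ} (hp : 1 < p)
    (hC : ∀ a b : ℝ, |a + b| ^ p ≤ |a| ^ p + p * signPow (p - 1) a * b
      + C * (|a| ^ p / R ^ 2 + (R ^ (p - 2) + 1) * |b| ^ p))
    {s v : α → ℝ} (hs : MemLp s (ENNReal.ofReal p) μ) (hv : MemLp v (ENNReal.ofReal p) μ) :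
    ∫ x, |s x + v x| ^ p ∂μ ≤ ∫ x, |s x| ^ p ∂μ + p * ∫ x, signPow (p - 1) (s x) * v x ∂μ
      + C * ((∫ x, |s x| ^ p ∂μ) / R ^ 2 + (R ^ (p - 2) + 1) * ∫ x, |v x| ^ p ∂μ) := by
  have hs' := hs.integrable_abs_rpow (by linarith)
  have hv' := hv.integrable_abs_rpow (by linarith)
  have hsv := integrable_signPow_mul hp.le hs hv
  have hA : Integrable (fun x => |s x| ^ p + p * (signPow (p - 1) (s x) * v x)) μ :=
    hs'.add (hsv.const_mul p)
  have hB : Integrable (fun x => |s x| ^ p / R ^ 2 + (R ^ (p - 2) + 1) * |v x| ^ p) μ :=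
    (hs'.div_const _).add (hv'.const_mul _)
  calc ∫ x, |s x + v x| ^ p ∂μ
      ≤ ∫ x, |s x| ^ p + p * (signPow (p - 1) (s x) * v x)
          + C * (|s x| ^ p / R ^ 2 + (R ^ (p - 2) + 1) * |v x| ^ p) ∂μ :=
        integral_mono_of_nonneg (ae_of_all _ fun x => by positivity) (hA.add (hB.const_mul C))
          (ae_of_all _ fun x => by simpa only [mul_assoc] using hC (s x) (v x))
    _ = _ := by
        rw [integral_add hA (hB.const_mul C), integral_add hs' (hsv.const_mul p),
          integral_const_mul, integral_const_mul, integral_add (hs'.div_const _) (hv'.const_mul _),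
          integral_div, integral_const_mul]

lemma integral_abs_sum_rpow_le_card_rpow {ι : Type*} {I : Finset ι} {u : ι → α → ℝ} (hp : 1 ≤ p)
    (hu : ∀ i ∈ I, MemLp (u i) (ENNReal.ofReal p) μ) (h1 : ∀ i ∈ I, ∫ x, |u i x| ^ p ∂μ ≤ 1) :
    ∫ x, |∑ i ∈ I, u i x| ^ p ∂μ ≤ (#I : ℝ) ^ p := by
  have hu' : ∀ i ∈ I, Integrable (fun x => |u i x| ^ p) μ :=
    fun i hi => (hu i hi).integrable_abs_rpow (by linarith)
  calc ∫ x, |∑ i ∈ I, u i x| ^ p ∂μ ≤ ∫ x, (#I : ℝ) ^ (p - 1) * ∑ i ∈ I, |u i x| ^ p ∂μ := by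
        refine integral_mono_of_nonneg (ae_of_all _ fun x => by positivity)
          ((integrable_finsetSum I hu').const_mul _) (ae_of_all _ fun x => ?_)
        exact (rpow_le_rpow (abs_nonneg _) (abs_sum_le_sum_abs _ _) (by linarith)).trans
          (rpow_sum_le_const_mul_sum_rpow I (fun i => u i x) hp)
    _ = (#I : ℝ) ^ (p - 1) * ∑ i ∈ I, ∫ x, |u i x| ^ p ∂μ := by
        rw [integral_const_mul, integral_finsetSum I hu']
    _ ≤ (#I : ℝ) ^ (p - 1) * #I := by
        gcongr
        simpa using sum_le_sum h1
    _ = (#I : ℝ) ^ p := (rpow_eq_rpow_sub_one_mul (Nat.cast_nonneg _) (by linarith)).symm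

end Integral

/-- Lemma 2 of the paper: recursive estimate for `∫ |ŝ_k|^p dμ`, with constants
`A, B > 0` depending only on `p`, independent of `k` and of the sequence. -/
theorem stmt_2 (p : ℝ) (hp : 1 < p) (n : ℕ) :
    ∃ A B : ℝ, 0 < A ∧ 0 < B ∧
      ∀ (μ : Measure (Fin n → ℝ)) (u : ℕ → (Fin n → ℝ) → ℝ),
        (∀ i, 1 ≤ i → MemLp (u i) (ENNReal.ofReal p) μ) →
        (∀ i, 1 ≤ i → ∫ x, |u i x| ^ p ∂μ ≤ 1) →
        ∀ k, 2 ≤ k →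
          (∫ x, |∑ i ∈ Finset.Icc 1 k, u i x| ^ p ∂μ) ≤
            (A + B * (k : ℝ) ^ (p - 2)) +
            p * ∫ x, |∑ i ∈ Finset.Icc 1 (k - 1), u i x| ^ (p - 1) *
                  Real.sign (∑ i ∈ Finset.Icc 1 (k - 1), u i x) * u k x ∂μ +
            ∫ x, |∑ i ∈ Finset.Icc 1 (k - 1), u i x| ^ p ∂μ := by
  obtain ⟨C, hC0, hC⟩ := exists_abs_add_rpow_le hp
  refine ⟨C, 2 * C, hC0, by positivity, fun μ u hu h1 k hk => ?_⟩
  obtain ⟨m, rfl⟩ : ∃ m, k = m + 1 := ⟨k - 1, by omega⟩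
  have hk : (1 : ℝ) ≤ (m + 1 : ℕ) := by exact_mod_cast Nat.le_add_left 1 m
  have hs : MemLp (fun x => ∑ i ∈ Icc 1 m, u i x) (ENNReal.ofReal p) μ :=
    memLp_finsetSum _ fun i hi => hu i (mem_Icc.1 hi).1
  have hsum : ∫ x, |∑ i ∈ Icc 1 m, u i x| ^ p ∂μ ≤ (m : ℝ) ^ p := by
    simpa using integral_abs_sum_rpow_le_card_rpow hp.le (fun i hi => hu i (mem_Icc.1 hi).1)
      fun i hi => h1 i (mem_Icc.1 hi).1
  have hmain := integral_abs_add_rpow_le hp (hC _ hk) hs (hu (m + 1) (by omega))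
  simp only [signPow] at hmain
  set k : ℝ := ((m + 1 : ℕ) : ℝ)
  have hpow : (m : ℝ) ^ p / k ^ 2 ≤ k ^ (p - 2) := by
    rw [div_le_iff₀ (by positivity), ← rpow_natCast, ← rpow_add (by positivity),
      show p - 2 + ((2 : ℕ) : ℝ) = p by push_cast; ring]
    exact rpow_le_rpow (Nat.cast_nonneg m) (by simp [k]) (by linarith)
  have herror : C * ((∫ x, |∑ i ∈ Icc 1 m, u i x| ^ p ∂μ) / k ^ 2
      + (k ^ (p - 2) + 1) * ∫ x, |u (m + 1) x| ^ p ∂μ) ≤ C + 2 * C * k ^ (p - 2) := by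
    have : (∫ x, |∑ i ∈ Icc 1 m, u i x| ^ p ∂μ) / k ^ 2 ≤ k ^ (p - 2) :=
      (div_le_div_of_nonneg_right hsum (by positivity)).trans hpow
    have := mul_le_mul_of_nonneg_left (h1 (m + 1) (by omega)) (by positivity : 0 ≤ k ^ (p - 2) + 1)
    nlinarith
  simp only [sum_Icc_succ_top (by omega : 1 ≤ m + 1), Nat.add_sub_cancel]
  linarith
end

section
/- Let 1 < p < ∞ and let (û_i) be a sequence in L^p(μ) converging weakly to 0. Then there is a subsequence (û_{i_r}) such that the arithmetic means (1/k) Σ_{r=1}^k û_{i_r} converge to 0 in the L^p norm as k → ∞. -/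
/-!
A weakly null sequence is bounded in `L^p` by Banach–Steinhaus, say `∫ |u i|^p ≤ B`. Write
`ψ(x) = |x|^(p-2) x` (this is `dualPow p`), so that `|·|^p` has derivative `p ψ` and
`ψ ∘ S ∈ L^q` for `S ∈ L^p`.
Choose the subsequence greedily: once `S_k = u (φ 0) + ⋯ + u (φ k)` is fixed, weak convergence
gives an index `φ (k+1) > φ k` with `∫ u (φ (k+1)) · ψ(S_k) ≤ 1`. Expanding `|S_k + v|^p` to first
order in `v`, the cross term is then at most `p`, and the remainder is `O(|v|^p)` for `p ≤ 2`
(Hölder continuity of `ψ`) and `O(|S_k|^(p-2) v² + |v|^p)` for `p > 2` (second order, then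
Hölder's inequality). For `A_k = ∫ |S_k|^p` this gives `A_{k+1} ≤ A_k + C + C A_k^(1-1/s)` with
`s = 1`, resp. `s = p/2`, hence `A_k = O(k^s)`, and since `s < p` the means `S_k / k` tend to `0`
in `L^p`.
-/

open Real MeasureTheory Filter Topology Finset

namespace BanachSaks

/-- `dualPow p x = sign x * |x| ^ (p - 1)`; the map `f ↦ dualPow p ∘ f` is the duality map
`L^p → L^q`, since `∫ f * dualPow p f = ‖f‖_p ^ p = ‖dualPow p ∘ f‖_q ^ q`. -/
noncomputable def dualPow (p x : ℝ) : ℝ := |x| ^ (p - 2) * x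

section RealInequalities

variable {p : ℝ}

lemma rpow_sub_one_mul_self {x r : ℝ} (hx : 0 ≤ x) (hr : r ≠ 0) : x ^ (r - 1) * x = x ^ r := by
  rw [← rpow_add_one' hx (by simpa using hr), sub_add_cancel]

lemma abs_rpow_sub_two_mul_abs (hp : 1 < p) (x : ℝ) : |x| ^ (p - 2) * |x| = |x| ^ (p - 1) := by
  rw [show p - 2 = p - 1 - 1 by ring, rpow_sub_one_mul_self (abs_nonneg x) (by linarith)]

lemma abs_dualPow (hp : 1 < p) (x : ℝ) : |dualPow p x| = |x| ^ (p - 1) := by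
  rw [dualPow, abs_mul, abs_of_nonneg (by positivity), abs_rpow_sub_two_mul_abs hp]

lemma mul_dualPow (hp : 1 < p) (x : ℝ) : x * dualPow p x = |x| ^ p := by
  rw [dualPow, ← rpow_sub_one_mul_self (abs_nonneg x) (by linarith : p ≠ 0),
    ← abs_rpow_sub_two_mul_abs hp, mul_assoc, abs_mul_abs_self]
  ring

lemma dualPow_neg (x : ℝ) : dualPow p (-x) = -dualPow p x := by
  simp [dualPow]

lemma dualPow_of_nonneg (hp : 1 < p) {x : ℝ} (hx : 0 ≤ x) : dualPow p x = x ^ (p - 1) := by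
  rw [dualPow, abs_of_nonneg hx, ← rpow_add_one' hx (by linarith)]
  ring_nf

lemma measurable_dualPow : Measurable (dualPow p) := by
  unfold dualPow; fun_prop

lemma hasDerivAt_abs_rpow_eq_mul_dualPow (hp : 1 < p) (x : ℝ) :
    HasDerivAt (fun y => |y| ^ p) (p * dualPow p x) x := by
  simpa [dualPow, mul_assoc] using hasDerivAt_abs_rpow x hp

lemma hasDerivAt_dualPow (hp : 2 ≤ p) (x : ℝ) :
    HasDerivAt (dualPow p) ((p - 1) * |x| ^ (p - 2)) x := by
  have hcont : Continuous fun y : ℝ => |y| ^ (p - 2) :=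
    continuous_abs.rpow_const fun _ => Or.inr (by linarith)
  refine hasDerivAt_of_hasDerivAt_of_ne' (f := dualPow p) (g := fun z => (p - 1) * |z| ^ (p - 2))
    (x := 0) (fun y hy => ?_) (hcont.mul continuous_id).continuousAt
    (continuous_const.mul hcont).continuousAt x
  have hquot : dualPow p =ᶠ[𝓝 y] fun z => |z| ^ p / z := by
    filter_upwards [eventually_ne_nhds hy] with z hz
    rw [eq_div_iff hz, mul_comm, mul_dualPow (by linarith)]
  refine ((hasDerivAt_abs_rpow y (by linarith)).div (hasDerivAt_id y) hy).congr_of_eventuallyEq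
    hquot |>.congr_deriv ?_
  have hsq : |y| ^ p = |y| ^ (p - 2) * y ^ 2 := by
    rw [← sq_abs, ← rpow_natCast, ← rpow_add (abs_pos.2 hy)]
    norm_num
  simp only [hsq, id]
  field_simp

lemma sub_rpow_le_rpow_sub {s a b : ℝ} (hs0 : 0 ≤ s) (hs1 : s ≤ 1) (hb : 0 ≤ b) (hba : b ≤ a) :
    a ^ s - b ^ s ≤ (a - b) ^ s := by
  have := rpow_add_le_add_rpow hb (sub_nonneg.2 hba) hs0 hs1
  rw [add_sub_cancel] at this
  linarith

lemma abs_dualPow_sub_le (hp : 1 < p) (hp2 : p ≤ 2) (x y : ℝ) :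
    |dualPow p x - dualPow p y| ≤ 2 * |x - y| ^ (p - 1) := by
  have hs0 : 0 ≤ p - 1 := by linarith
  have hs1 : p - 1 ≤ 1 := by linarith
  wlog hyx : y ≤ x generalizing x y
  · rw [abs_sub_comm, abs_sub_comm x]; exact this y x (by linarith)
  wlog hx : 0 ≤ x generalizing x y
  · have := this (-y) (-x) (by linarith) (by linarith)
    rwa [dualPow_neg, dualPow_neg, neg_sub_neg, abs_sub_comm, neg_sub_neg, abs_sub_comm] at this
  rw [abs_of_nonneg (sub_nonneg.2 hyx), dualPow_of_nonneg hp hx]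
  rcases le_total 0 y with hy | hy
  · rw [dualPow_of_nonneg hp hy, abs_of_nonneg (by linarith [rpow_le_rpow hy hyx hs0])]
    linarith [sub_rpow_le_rpow_sub hs0 hs1 hy hyx, rpow_nonneg (sub_nonneg.2 hyx) (p - 1)]
  · have hy' : dualPow p y = -(-y) ^ (p - 1) := by
      rw [← neg_neg y, dualPow_neg, neg_neg, dualPow_of_nonneg hp (by linarith)]
    have hy0 := rpow_nonneg (neg_nonneg.2 hy) (p - 1)
    rw [hy', abs_of_nonneg (by linarith [rpow_nonneg hx (p - 1)])]
    linarith [rpow_le_rpow hx (by linarith : x ≤ x - y) hs0,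
      rpow_le_rpow (by linarith) (by linarith : -y ≤ x - y) hs0]

lemma exists_sub_eq_deriv_mul {g g' : ℝ → ℝ} (hg : ∀ x, HasDerivAt g (g' x) x) (a b : ℝ) :
    ∃ c, |c| ≤ |b| ∧ g (a + b) - g a = g' (a + c) * b := by
  have hline : ∀ t, HasDerivAt (fun t => g (a + t * b)) (g' (a + t * b) * b) t := fun t =>
    (hg _).comp t (((hasDerivAt_id t).mul_const b).const_add a) |>.congr_deriv (by simp)
  obtain ⟨ξ, hξ, hslope⟩ := exists_hasDerivAt_eq_slope _ _ zero_lt_one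
    (fun t _ => (hline t).continuousAt.continuousWithinAt) (fun t _ => hline t)
  refine ⟨ξ * b, ?_, ?_⟩
  · rw [abs_mul, abs_of_pos hξ.1]
    exact mul_le_of_le_one_left (abs_nonneg b) hξ.2.le
  · simpa using hslope.symm

lemma abs_add_rpow_le_of_le_two (hp : 1 < p) (hp2 : p ≤ 2) (a b : ℝ) :
    |a + b| ^ p ≤ |a| ^ p + p * dualPow p a * b + 2 * p * |b| ^ p := by
  obtain ⟨c, hcb, hc⟩ := exists_sub_eq_deriv_mul (hasDerivAt_abs_rpow_eq_mul_dualPow hp) a b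
  have hrem : (dualPow p (a + c) - dualPow p a) * b ≤ 2 * |b| ^ p := calc
    _ ≤ |dualPow p (a + c) - dualPow p a| * |b| := (le_abs_self _).trans (abs_mul _ _).le
    _ ≤ 2 * |c| ^ (p - 1) * |b| := by
      gcongr; simpa using abs_dualPow_sub_le hp hp2 (a + c) a
    _ ≤ 2 * |b| ^ (p - 1) * |b| := by gcongr
    _ = 2 * |b| ^ p := by rw [mul_assoc, rpow_sub_one_mul_self (abs_nonneg b) (by linarith)]
  linarith [mul_le_mul_of_nonneg_left hrem (by linarith : (0 : ℝ) ≤ p)]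

lemma add_rpow_le_two_rpow_mul_add {a b r : ℝ} (ha : 0 ≤ a) (hb : 0 ≤ b) (hr : 0 ≤ r) :
    (a + b) ^ r ≤ 2 ^ r * (a ^ r + b ^ r) := by
  wlog hba : b ≤ a generalizing a b
  · rw [add_comm a, add_comm (a ^ r)]; exact this hb ha (by linarith)
  calc (a + b) ^ r ≤ (2 * a) ^ r := by gcongr; linarith
    _ = 2 ^ r * a ^ r := mul_rpow zero_le_two ha
    _ ≤ 2 ^ r * (a ^ r + b ^ r) := by gcongr; linarith [rpow_nonneg hb r]

lemma abs_add_rpow_le_of_two_le (hp : 2 ≤ p) (a b : ℝ) :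
    |a + b| ^ p ≤ |a| ^ p + p * dualPow p a * b +
      p * (p - 1) * 2 ^ (p - 2) * (|a| ^ (p - 2) * b ^ 2 + |b| ^ p) := by
  obtain ⟨c, hcb, hc⟩ :=
    exists_sub_eq_deriv_mul (hasDerivAt_abs_rpow_eq_mul_dualPow (by linarith)) a b
  obtain ⟨d, hdc, hd⟩ := exists_sub_eq_deriv_mul (hasDerivAt_dualPow hp) a c
  have hpow : |a + d| ^ (p - 2) ≤ 2 ^ (p - 2) * (|a| ^ (p - 2) + |b| ^ (p - 2)) := calc
    _ ≤ (|a| + |b|) ^ (p - 2) := by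
      gcongr; exact (abs_add_le a d).trans (by linarith)
    _ ≤ _ := add_rpow_le_two_rpow_mul_add (abs_nonneg a) (abs_nonneg b) (by linarith)
  have hrem : (dualPow p (a + c) - dualPow p a) * b ≤
      (p - 1) * 2 ^ (p - 2) * (|a| ^ (p - 2) * b ^ 2 + |b| ^ p) := calc
    _ = (p - 1) * |a + d| ^ (p - 2) * (c * b) := by rw [hd]; ring
    _ ≤ (p - 1) * |a + d| ^ (p - 2) * b ^ 2 := by
      gcongr
      · exact mul_nonneg (by linarith) (by positivity)
      · calc c * b ≤ |c| * |b| := (le_abs_self _).trans (abs_mul _ _).le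
          _ ≤ |b| * |b| := by gcongr
          _ = b ^ 2 := by rw [abs_mul_abs_self, sq]
    _ ≤ (p - 1) * (2 ^ (p - 2) * (|a| ^ (p - 2) + |b| ^ (p - 2))) * b ^ 2 := by
      gcongr; linarith
    _ = _ := by
      have hb : |b| ^ (p - 2) * b ^ 2 = |b| ^ p := by
        rw [← sq_abs b, ← rpow_natCast, ← rpow_add' (abs_nonneg b) (by norm_num; linarith)]
        norm_num
      rw [← hb]
      ring
  linarith [mul_le_mul_of_nonneg_left hrem (by linarith : (0 : ℝ) ≤ p)]

end RealInequalities

section Sequences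

lemma exists_strictMono_forall_sum_range {M : Type*} [AddCommMonoid M] (v : ℕ → M)
    {P : M → ℕ → Prop} (hP : ∀ S, ∀ᶠ n in atTop, P S n) :
    ∃ φ : ℕ → ℕ, StrictMono φ ∧ ∀ k, P (∑ r ∈ range (k + 1), v (φ r)) (φ (k + 1)) := by
  choose next hnext using fun s : ℕ × M => ((hP s.2).and (eventually_gt_atTop s.1)).exists
  let state : ℕ → ℕ × M := fun k =>
    Nat.rec (0, v 0) (fun _ s => (next s, s.2 + v (next s))) k
  have hsum : ∀ k, (state k).2 = ∑ r ∈ range (k + 1), v (state r).1 := by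
    intro k
    induction k with
    | zero => simp [state]
    | succ k ih => rw [sum_range_succ, ← ih]
  refine ⟨fun k => (state k).1, strictMono_nat_of_lt_succ fun k => (hnext (state k)).2,
    fun k => ?_⟩
  rw [← hsum]
  exact (hnext (state k)).1

lemma rpow_add_rpow_sub_one_le {x s : ℝ} (hx : 0 < x) (hs : 1 ≤ s) :
    x ^ s + x ^ (s - 1) ≤ (x + 1) ^ s := calc
  x ^ s + x ^ (s - 1) = x ^ (s - 1) * (x + 1) := by
    rw [mul_add, mul_one, rpow_sub_one_mul_self hx.le (by linarith)]
  _ ≤ (x + 1) ^ (s - 1) * (x + 1) := by gcongr; linarith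
  _ = (x + 1) ^ s := rpow_sub_one_mul_self (by linarith) (by linarith)

lemma exists_le_mul_rpow_of_le_add_rpow {a : ℕ → ℝ} {C s : ℝ} (ha : ∀ k, 0 ≤ a k) (hC : 0 ≤ C)
    (hs : 1 ≤ s) (hrec : ∀ k, a (k + 1) ≤ a k + C + C * a k ^ (1 - 1 / s)) :
    ∃ D, ∀ k, a k ≤ D * ((k : ℝ) + 1) ^ s := by
  set D := max (max (a 0) (2 * C)) (max ((2 * C) ^ s) 1)
  have hD1 : 1 ≤ D := le_max_of_le_right (le_max_right _ _)
  have hD0 : 0 < D := by linarith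
  have hD2C : 2 * C ≤ D := le_max_of_le_left (le_max_right _ _)
  have hCD : C * D ^ (1 - 1 / s) ≤ D / 2 := by
    have h2C : 2 * C ≤ D ^ (1 / s) := calc
      2 * C = ((2 * C) ^ s) ^ (1 / s) := by
        rw [← rpow_mul (by linarith), mul_one_div_cancel (by linarith), rpow_one]
      _ ≤ D ^ (1 / s) := by gcongr; exact le_max_of_le_right (le_max_left _ _)
    have := mul_le_mul_of_nonneg_right h2C (rpow_nonneg hD0.le (1 - 1 / s))
    rw [← rpow_add hD0, add_sub_cancel, rpow_one] at this
    linarith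
  refine ⟨D, fun k => ?_⟩
  induction k with
  | zero =>
    rw [Nat.cast_zero, zero_add, one_rpow, mul_one]
    exact le_trans (le_max_left _ _) (le_max_left _ _)
  | succ k ih =>
    set x : ℝ := (k : ℝ) + 1
    have hx : 1 ≤ x := by simp [x]
    have hpow : (D * x ^ s) ^ (1 - 1 / s) = D ^ (1 - 1 / s) * x ^ (s - 1) := by
      rw [mul_rpow hD0.le (by positivity), ← rpow_mul (by positivity), mul_sub, mul_one,
        mul_one_div_cancel (by linarith)]
    have hC2 : C ≤ D / 2 * x ^ (s - 1) :=
      calc C ≤ D / 2 := by linarith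
        _ ≤ D / 2 * x ^ (s - 1) := le_mul_of_one_le_right (by positivity)
          (one_le_rpow hx (by linarith))
    calc a (k + 1) ≤ a k + C + C * a k ^ (1 - 1 / s) := hrec k
      _ ≤ D * x ^ s + C + C * (D * x ^ s) ^ (1 - 1 / s) := by
        gcongr
        · exact ha k
        · exact sub_nonneg.2 (div_le_one_of_le₀ hs (by linarith))
      _ ≤ D * x ^ s + D / 2 * x ^ (s - 1) + D / 2 * x ^ (s - 1) := by
        rw [hpow, ← mul_assoc]; gcongr
      _ = D * (x ^ s + x ^ (s - 1)) := by ring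
      _ ≤ D * ((↑(k + 1) : ℝ) + 1) ^ s := by
        push_cast; gcongr; exact rpow_add_rpow_sub_one_le (by linarith) hs

end Sequences

section Lp

variable {X : Type*} [MeasurableSpace X] {μ : Measure X} {p q : ℝ}

lemma integrable_abs_rpow (hp : 0 < p) {f : X → ℝ} (hf : MemLp f (ENNReal.ofReal p) μ) :
    Integrable (fun x => |f x| ^ p) μ := by
  simpa [ENNReal.toReal_ofReal hp.le] using
    hf.integrable_norm_rpow (by simpa using hp) ENNReal.ofReal_ne_top

lemma memLp_abs_rpow {r : ℝ} (hr : 0 < r) {f : X → ℝ} (hf : MemLp f (ENNReal.ofReal p) μ) :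
    MemLp (fun x => |f x| ^ r) (ENNReal.ofReal (p / r)) μ := by
  simpa [ENNReal.toReal_ofReal hr.le, ENNReal.ofReal_div_of_pos hr] using
    hf.norm_rpow_div (ENNReal.ofReal r)

lemma memLp_dualPow (hpq : p.HolderConjugate q) {f : X → ℝ}
    (hf : MemLp f (ENNReal.ofReal p) μ) :
    MemLp (fun x => dualPow p (f x)) (ENNReal.ofReal q) μ := by
  rw [hpq.conjugate_eq]
  exact (memLp_abs_rpow hpq.sub_one_pos hf).congr_norm
    (measurable_dualPow.comp_aemeasurable hf.aemeasurable).aestronglyMeasurable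
    (ae_of_all _ fun x => by
      rw [norm_eq_abs, norm_eq_abs, abs_dualPow hpq.lt, abs_of_nonneg (by positivity)])

lemma integrable_mul_of_holderConjugate {r s : ℝ} (hrs : r.HolderConjugate s) {f g : X → ℝ}
    (hf : MemLp f (ENNReal.ofReal r) μ) (hg : MemLp g (ENNReal.ofReal s) μ) :
    Integrable (fun x => f x * g x) μ :=
  have := hrs.ennrealOfReal
  hf.integrable_mul hg

lemma integral_abs_add_rpow_le (hpq : p.HolderConjugate q) {S v R : X → ℝ}
    (hS : MemLp S (ENNReal.ofReal p) μ) (hv : MemLp v (ENNReal.ofReal p) μ)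
    (hR : Integrable R μ)
    (h : ∀ x, |S x + v x| ^ p ≤ |S x| ^ p + p * dualPow p (S x) * v x + R x) :
    ∫ x, |S x + v x| ^ p ∂μ ≤
      ∫ x, |S x| ^ p ∂μ + p * ∫ x, v x * dualPow p (S x) ∂μ + ∫ x, R x ∂μ := by
  have hcross : Integrable (fun x => v x * dualPow p (S x)) μ :=
    integrable_mul_of_holderConjugate hpq hv (memLp_dualPow hpq hS)
  calc ∫ x, |S x + v x| ^ p ∂μ
      ≤ ∫ x, (|S x| ^ p + p * (v x * dualPow p (S x)) + R x) ∂μ :=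
        integral_mono (integrable_abs_rpow hpq.pos (hS.add hv))
          (((integrable_abs_rpow hpq.pos hS).add (hcross.const_mul p)).add hR)
          fun x => (h x).trans_eq (by ring)
    _ = _ := by
      rw [integral_add ?_ hR, integral_add (integrable_abs_rpow hpq.pos hS) (hcross.const_mul p),
        integral_const_mul]
      exact (integrable_abs_rpow hpq.pos hS).add (hcross.const_mul p)

lemma integral_abs_add_rpow_le_of_le_two (hpq : p.HolderConjugate q) (hp2 : p ≤ 2)
    {S v : X → ℝ} (hS : MemLp S (ENNReal.ofReal p) μ) (hv : MemLp v (ENNReal.ofReal p) μ)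
    (hcross : ∫ x, v x * dualPow p (S x) ∂μ ≤ 1) :
    ∫ x, |S x + v x| ^ p ∂μ ≤ ∫ x, |S x| ^ p ∂μ + p + 2 * p * ∫ x, |v x| ^ p ∂μ := by
  have h := integral_abs_add_rpow_le hpq hS hv
    ((integrable_abs_rpow hpq.pos hv).const_mul (2 * p))
    fun x => abs_add_rpow_le_of_le_two hpq.lt hp2 (S x) (v x)
  rw [integral_const_mul] at h
  linarith [mul_le_mul_of_nonneg_left hcross hpq.nonneg]

lemma integrable_abs_rpow_mul_sq_and_integral_le (hp : 2 < p) {S v : X → ℝ}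
    (hS : MemLp S (ENNReal.ofReal p) μ) (hv : MemLp v (ENNReal.ofReal p) μ) :
    Integrable (fun x => |S x| ^ (p - 2) * v x ^ 2) μ ∧
    ∫ x, |S x| ^ (p - 2) * v x ^ 2 ∂μ ≤
      (∫ x, |S x| ^ p ∂μ) ^ ((p - 2) / p) * (∫ x, |v x| ^ p ∂μ) ^ (2 / p) := by
  have hconj : (p / (p - 2)).HolderConjugate (p / 2) := by
    rw [Real.holderConjugate_iff]
    constructor
    · rw [lt_div_iff₀ (by linarith)]; linarith
    · field_simp; ring
  have hS' := memLp_abs_rpow (by linarith : 0 < p - 2) hS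
  have hv' : MemLp (fun x => v x ^ 2) (ENNReal.ofReal (p / 2)) μ :=
    (memLp_abs_rpow two_pos hv).ae_eq (ae_of_all _ fun x => by simp)
  refine ⟨integrable_mul_of_holderConjugate hconj hS' hv', ?_⟩
  have h := integral_mul_le_Lp_mul_Lq_of_nonneg hconj (ae_of_all _ fun x => by positivity)
    (ae_of_all _ fun x => sq_nonneg (v x)) hS' hv'
  have e1 : ∀ x, (|S x| ^ (p - 2)) ^ (p / (p - 2)) = |S x| ^ p := fun x => by
    rw [← rpow_mul (abs_nonneg _), mul_div_cancel₀ _ (by linarith)]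
  have e2 : ∀ x, (v x ^ 2) ^ (p / 2) = |v x| ^ p := fun x => by
    rw [← sq_abs, ← rpow_two, ← rpow_mul (abs_nonneg _), mul_div_cancel₀ _ two_ne_zero]
  simp only [e1, e2, one_div_div] at h
  exact h

lemma integral_abs_add_rpow_le_of_two_lt (hpq : p.HolderConjugate q) (hp2 : 2 < p)
    {S v : X → ℝ} (hS : MemLp S (ENNReal.ofReal p) μ) (hv : MemLp v (ENNReal.ofReal p) μ)
    (hcross : ∫ x, v x * dualPow p (S x) ∂μ ≤ 1) :
    ∫ x, |S x + v x| ^ p ∂μ ≤ ∫ x, |S x| ^ p ∂μ + p + p * (p - 1) * 2 ^ (p - 2) *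
      ((∫ x, |S x| ^ p ∂μ) ^ ((p - 2) / p) * (∫ x, |v x| ^ p ∂μ) ^ (2 / p) +
        ∫ x, |v x| ^ p ∂μ) := by
  obtain ⟨hint, hHolder⟩ := integrable_abs_rpow_mul_sq_and_integral_le hp2 hS hv
  have h := integral_abs_add_rpow_le hpq hS hv
    (R := fun x => p * (p - 1) * 2 ^ (p - 2) * (|S x| ^ (p - 2) * v x ^ 2 + |v x| ^ p))
    ((hint.add (integrable_abs_rpow hpq.pos hv)).const_mul (p * (p - 1) * 2 ^ (p - 2)))
    fun x => abs_add_rpow_le_of_two_le hp2.le (S x) (v x)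
  rw [integral_const_mul, integral_add hint (integrable_abs_rpow hpq.pos hv)] at h
  have hK : 0 ≤ p * (p - 1) * 2 ^ (p - 2) := by
    have := hpq.pos; have := hpq.sub_one_pos; positivity
  linarith [mul_le_mul_of_nonneg_left hcross hpq.nonneg, mul_le_mul_of_nonneg_left hHolder hK]

lemma exists_integral_abs_add_rpow_le (hpq : p.HolderConjugate q) {B : ℝ} (hB : 0 ≤ B) :
    ∃ C s : ℝ, 0 ≤ C ∧ 1 ≤ s ∧ s < p ∧ ∀ S v : X → ℝ, MemLp S (ENNReal.ofReal p) μ →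
      MemLp v (ENNReal.ofReal p) μ → ∫ x, |v x| ^ p ∂μ ≤ B →
      ∫ x, v x * dualPow p (S x) ∂μ ≤ 1 →
      ∫ x, |S x + v x| ^ p ∂μ ≤
        ∫ x, |S x| ^ p ∂μ + C + C * (∫ x, |S x| ^ p ∂μ) ^ (1 - 1 / s) := by
  have hp := hpq.lt
  rcases le_or_gt p 2 with hp2 | hp2
  · refine ⟨p + 2 * p * B, 1, by positivity, le_rfl, hp, fun S v hS hv hvB hcross => ?_⟩
    have h := integral_abs_add_rpow_le_of_le_two hpq hp2 hS hv hcross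
    rw [div_one, sub_self, rpow_zero]
    linarith [mul_le_mul_of_nonneg_left hvB (by positivity : 0 ≤ 2 * p),
      (by positivity : 0 ≤ p + 2 * p * B)]
  set K := p * (p - 1) * 2 ^ (p - 2)
  have hK : 0 ≤ K := mul_nonneg (by nlinarith) (by positivity)
  refine ⟨p + K * B + K * B ^ (2 / p), p / 2, by positivity, by linarith, by linarith,
    fun S v hS hv hvB hcross => ?_⟩
  have h := integral_abs_add_rpow_le_of_two_lt hpq hp2 hS hv hcross
  have hexp : 1 - 1 / (p / 2) = (p - 2) / p := by field_simp
  set A := ∫ x, |S x| ^ p ∂μ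
  set V := ∫ x, |v x| ^ p ∂μ
  have hV : V ^ (2 / p) ≤ B ^ (2 / p) :=
    rpow_le_rpow (integral_nonneg fun x => by positivity) hvB (by positivity)
  have hAt : 0 ≤ A ^ ((p - 2) / p) := by positivity
  rw [hexp]
  calc ∫ x, |S x + v x| ^ p ∂μ ≤ A + p + K * (A ^ ((p - 2) / p) * V ^ (2 / p) + V) := h
    _ ≤ A + p + K * (A ^ ((p - 2) / p) * B ^ (2 / p) + B) := by gcongr
    _ ≤ A + (p + K * B + K * B ^ (2 / p)) + (p + K * B + K * B ^ (2 / p)) * A ^ ((p - 2) / p) := by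
        linarith [mul_nonneg hAt (by positivity : 0 ≤ p + K * B),
          mul_nonneg hK (rpow_nonneg hB (2 / p))]

lemma integral_abs_const_mul_rpow_rpow (hp : 0 < p) (c : ℝ) (f : X → ℝ) :
    (∫ x, |c * f x| ^ p ∂μ) ^ (1 / p) = |c| * (∫ x, |f x| ^ p ∂μ) ^ (1 / p) := by
  simp_rw [abs_mul, mul_rpow (abs_nonneg c) (abs_nonneg _)]
  rw [integral_const_mul, mul_rpow (by positivity) (integral_nonneg fun x => by positivity),
    ← rpow_mul (abs_nonneg c), mul_one_div_cancel hp.ne', rpow_one]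

lemma tendsto_integral_inv_mul_rpow {F : ℕ → X → ℝ} {D s : ℝ} (hp : 0 < p) (hsp : s < p)
    (hF : ∀ k, ∫ x, |F (k + 1) x| ^ p ∂μ ≤ D * ((k : ℝ) + 1) ^ s) :
    Tendsto (fun k : ℕ => (∫ x, |(k : ℝ)⁻¹ * F k x| ^ p ∂μ) ^ (1 / p)) atTop (𝓝 0) := by
  have hD : 0 ≤ D := by simpa using (integral_nonneg fun x => by positivity).trans (hF 0)
  have hlim : Tendsto (fun k : ℕ => D ^ (1 / p) * ((k : ℝ) + 1) ^ (s / p - 1)) atTop (𝓝 0) := by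
    have hexp : 0 < 1 - s / p := by rw [sub_pos, div_lt_one hp]; exact hsp
    have h := (tendsto_rpow_neg_atTop hexp).comp
      (tendsto_atTop_add_const_right _ 1 tendsto_natCast_atTop_atTop)
    simpa [neg_sub] using h.const_mul (D ^ (1 / p))
  rw [← tendsto_add_atTop_iff_nat 1]
  refine squeeze_zero (fun k => by positivity) (fun k => ?_) hlim
  have hK : (0 : ℝ) < (k : ℝ) + 1 := by positivity
  calc (∫ x, |((k + 1 : ℕ) : ℝ)⁻¹ * F (k + 1) x| ^ p ∂μ) ^ (1 / p)
      = ((k : ℝ) + 1)⁻¹ * (∫ x, |F (k + 1) x| ^ p ∂μ) ^ (1 / p) := by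
        rw [integral_abs_const_mul_rpow_rpow hp]; push_cast; rw [abs_inv, abs_of_pos hK]
    _ ≤ ((k : ℝ) + 1)⁻¹ * (D * ((k : ℝ) + 1) ^ s) ^ (1 / p) := by gcongr; exact hF k
    _ = D ^ (1 / p) * ((k : ℝ) + 1) ^ (s / p - 1) := by
        rw [mul_rpow hD (by positivity), ← rpow_mul hK.le, rpow_sub hK, rpow_one, mul_one_div]
        ring

lemma norm_toLp_eq_integral_rpow {r : ℝ} (hr : 0 < r) {f : X → ℝ}
    (hf : MemLp f (ENNReal.ofReal r) μ) :
    ‖hf.toLp f‖ = (∫ x, |f x| ^ r ∂μ) ^ (1 / r) := by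
  rw [Lp.norm_toLp, hf.eLpNorm_eq_integral_rpow_norm (by simpa using hr) ENNReal.ofReal_ne_top,
    ENNReal.toReal_ofReal (by positivity), ENNReal.toReal_ofReal hr.le, one_div]
  simp only [norm_eq_abs]

/-- Testing against `dualPow p f`, for which Hölder's inequality is an equality. -/
lemma integral_abs_rpow_le_of_integral_mul_le (hpq : p.HolderConjugate q) {f : X → ℝ}
    (hf : MemLp f (ENNReal.ofReal p) μ) {C : ℝ} (hC0 : 0 ≤ C)
    (hC : ∀ w, MemLp w (ENNReal.ofReal q) μ →
      ∫ x, f x * w x ∂μ ≤ C * (∫ x, |w x| ^ q ∂μ) ^ (1 / q)) :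
    ∫ x, |f x| ^ p ∂μ ≤ C ^ p := by
  set I := ∫ x, |f x| ^ p ∂μ
  have hI0 : 0 ≤ I := integral_nonneg fun x => by positivity
  have hI : I ≤ C * I ^ (1 / q) := by
    have h := hC _ (memLp_dualPow hpq hf)
    simp only [mul_dualPow hpq.lt, abs_dualPow hpq.lt, ← rpow_mul (abs_nonneg _),
      hpq.sub_one_mul_conj] at h
    exact h
  rcases hI0.eq_or_lt with hI0 | hIpos
  · rw [← hI0]; positivity
  have hsplit : I = I ^ (1 / p) * I ^ (1 / q) := by
    rw [← rpow_add hIpos, one_div, one_div, hpq.inv_add_inv_eq_one, rpow_one]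
  have hroot : I ^ (1 / p) ≤ C :=
    le_of_mul_le_mul_right (hsplit.symm.trans_le hI) (rpow_pos_of_pos hIpos _)
  calc I = (I ^ (1 / p)) ^ p := by rw [← rpow_mul hI0, one_div_mul_cancel hpq.ne_zero, rpow_one]
    _ ≤ C ^ p := rpow_le_rpow (by positivity) hroot hpq.nonneg

lemma exists_integral_abs_rpow_le_of_tendsto (hpq : p.HolderConjugate q) {u : ℕ → X → ℝ}
    (hu : ∀ i, MemLp (u i) (ENNReal.ofReal p) μ)
    (hweak : ∀ w : X → ℝ, MemLp w (ENNReal.ofReal q) μ →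
      Tendsto (fun i => ∫ x, u i x * w x ∂μ) atTop (𝓝 0)) :
    ∃ B, ∀ i, ∫ x, |u i x| ^ p ∂μ ≤ B := by
  have := hpq.ennrealOfReal
  have : Fact (1 ≤ ENNReal.ofReal p) := ⟨ENNReal.one_le_ofReal.2 hpq.lt.le⟩
  have : Fact (1 ≤ ENNReal.ofReal q) := ⟨ENNReal.one_le_ofReal.2 hpq.symm.lt.le⟩
  let T : ℕ → Lp ℝ (ENNReal.ofReal q) μ →L[ℝ] ℝ := fun i =>
    (ContinuousLinearMap.mul ℝ ℝ).lpPairing μ _ _ ((hu i).toLp (u i))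
  have hT : ∀ i w, T i w = ∫ x, u i x * w x ∂μ := fun i w => by
    rw [ContinuousLinearMap.lpPairing_eq_integral]
    exact integral_congr_ae ((hu i).coeFn_toLp.mono fun x hx => by simp [hx])
  obtain ⟨C, hC⟩ := banach_steinhaus (g := T) fun w => by
    obtain ⟨C, hC⟩ := (hweak w (Lp.memLp w)).norm.bddAbove_range
    exact ⟨C, fun i => (hT i w).symm ▸ hC ⟨i, rfl⟩⟩
  refine ⟨max C 0 ^ p, fun i =>
    integral_abs_rpow_le_of_integral_mul_le hpq (hu i) (le_max_right _ _) fun w hw => ?_⟩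
  calc ∫ x, u i x * w x ∂μ = T i (hw.toLp w) := by
        rw [hT]; exact integral_congr_ae (hw.coeFn_toLp.mono fun x hx => by simp [hx])
    _ ≤ ‖T i‖ * ‖hw.toLp w‖ := (le_norm_self _).trans ((T i).le_opNorm _)
    _ ≤ max C 0 * (∫ x, |w x| ^ q ∂μ) ^ (1 / q) := by
        rw [norm_toLp_eq_integral_rpow hpq.symm.pos]
        gcongr
        exact (hC i).trans (le_max_left _ _)

lemma eventually_integral_mul_dualPow_le_one (hpq : p.HolderConjugate q) {u : ℕ → X → ℝ}
    (hweak : ∀ w : X → ℝ, MemLp w (ENNReal.ofReal q) μ →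
      Tendsto (fun i => ∫ x, u i x * w x ∂μ) atTop (𝓝 0)) (S : X → ℝ) :
    ∀ᶠ n in atTop, MemLp S (ENNReal.ofReal p) μ → ∫ x, u n x * dualPow p (S x) ∂μ ≤ 1 := by
  by_cases hS : MemLp S (ENNReal.ofReal p) μ
  · filter_upwards [(hweak _ (memLp_dualPow hpq hS)).eventually (eventually_le_nhds one_pos)]
      with n hn using fun _ => hn
  · exact Eventually.of_forall fun n h => absurd h hS

end Lp

end BanachSaks

open BanachSaks

/-- Banach–Saks theorem for `L^p(μ)`, `1 < p < ∞`: a sequence converging weakly to `0`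
has a subsequence whose arithmetic means converge to `0` in `L^p` norm. -/
theorem stmt_5 {X : Type*} [MeasurableSpace X] (μ : Measure X) (p q : ℝ) (hp : 1 < p)
    (hpq : 1 / p + 1 / q = 1)
    (u : ℕ → X → ℝ)
    (hu : ∀ i, MemLp (u i) (ENNReal.ofReal p) μ)
    (hweak : ∀ w : X → ℝ, MemLp w (ENNReal.ofReal q) μ →
      Tendsto (fun i => ∫ x, u i x * w x ∂μ) atTop (𝓝 0)) :
    ∃ φ : ℕ → ℕ, StrictMono φ ∧
      Tendsto (fun k : ℕ => (∫ x, |(k : ℝ)⁻¹ * ∑ r ∈ Finset.range k, u (φ r) x| ^ p ∂μ) ^ (1 / p))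
        atTop (𝓝 0) := by
  have hpq' : p.HolderConjugate q :=
    Real.holderConjugate_iff.2 ⟨hp, by simpa only [one_div] using hpq⟩
  obtain ⟨B, hB⟩ := exists_integral_abs_rpow_le_of_tendsto hpq' hu hweak
  obtain ⟨C, s, hC, hs, hsp, hstep⟩ := exists_integral_abs_add_rpow_le (μ := μ) hpq'
    ((integral_nonneg fun x => by positivity).trans (hB 0))
  obtain ⟨φ, hφ, hcross⟩ :=
    exists_strictMono_forall_sum_range u (eventually_integral_mul_dualPow_le_one hpq' hweak)
  have hsum : ∀ k, MemLp (∑ r ∈ range k, u (φ r)) (ENNReal.ofReal p) μ := fun k =>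
    memLp_finsetSum' _ fun r _ => hu (φ r)
  obtain ⟨D, hD⟩ := exists_le_mul_rpow_of_le_add_rpow
    (a := fun k => ∫ x, |(∑ r ∈ range (k + 1), u (φ r)) x| ^ p ∂μ)
    (fun k => integral_nonneg fun x => by positivity) hC hs fun k => by
      simp only [sum_range_succ _ (k + 1), Pi.add_apply]
      exact hstep _ _ (hsum _) (hu _) (hB _) (hcross k (hsum _))
  refine ⟨φ, hφ, ?_⟩
  simpa only [Finset.sum_apply] using tendsto_integral_inv_mul_rpow
    (F := fun k => ∑ r ∈ range k, u (φ r)) hpq'.pos hsp hD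
end

section
/- Let K ⊆ ℝ^m be a closed convex set and f : K → ℝ a continuous convex function (not necessarily nonnegative). Suppose u and u_i are measurable ℝ^m-valued functions on ℝ^n with values in K whose components lie in L^∞(μ), and u_i → u weakly* in (L^∞(μ))^m. Then for every bounded measurable set Ω ⊂ ℝ^n: liminf_{i→∞} ∫_Ω f(u_i) dμ ≥ ∫_Ω f(u) dμ, provided μ(Ω) < ∞. -/
open Real MeasureTheory Filter Topology Finset ENNReal

/-!
A weak* convergent sequence in `L^∞` is bounded (Banach–Steinhaus on `L¹`), so `u i` and `v`
take values a.e. in a compact set `C ⊆ K`, on which `f` is bounded. By Hahn–Banach and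
compactness of `C`, finitely many affine minorants of `f` approximate it within `δ` on `C`;
selecting one of them measurably at the point `v x` gives a simple field of affine minorants
`ℓₓ` with `f (v x) ≤ ℓₓ (v x) + δ`. Since `ℓₓ` has simple, hence integrable, coefficients,
weak* convergence gives `∫ ℓₓ (u i x) → ∫ ℓₓ (v x)`, while `∫ ℓₓ (u i x) ≤ ∫ f (u i x)`.
-/

section AffineMinorants

variable {E : Type*} [TopologicalSpace E] [AddCommGroup E] [Module ℝ E] [IsTopologicalAddGroup E]
  [ContinuousSMul ℝ E] [LocallyConvexSpace ℝ E] {K : Set E} {f : E → ℝ}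

theorem ConvexOn.exists_affine_le_and_lt_add_nhds (hKcl : IsClosed K) (hf_conv : ConvexOn ℝ K f)
    (hf_cont : ContinuousOn f K) {y : E} (hy : y ∈ K) {δ : ℝ} (hδ : 0 < δ) :
    ∃ p : (E →L[ℝ] ℝ) × ℝ, (∀ z ∈ K, p.1 z + p.2 ≤ f z) ∧
      ∃ U, IsOpen U ∧ y ∈ U ∧ ∀ z ∈ U ∩ K, f z < p.1 z + p.2 + δ := by
  obtain ⟨l, c, hle, hly⟩ := hf_conv.exists_affine_le_of_lt (𝕜 := ℝ) hy
    (sub_lt_self (f y) (half_pos hδ)) hKcl hf_cont.lowerSemicontinuousOn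
  have hgap : ContinuousOn (fun z => f z - (l z + c)) K := hf_cont.sub (by fun_prop)
  have hnear : ∀ᶠ z in 𝓝[K] y, f z - (l z + c) < δ :=
    hgap y hy (Iio_mem_nhds (by simp only [RCLike.re_to_real] at hly; linarith))
  obtain ⟨U, hU, hyU, hUK⟩ := mem_nhdsWithin.1 hnear
  refine ⟨(l, c), fun z hz => by simpa using hle ⟨z, hz⟩, U, hU, hyU, fun z hz => ?_⟩
  have := hUK hz
  simp only [Set.mem_ofPred_eq] at this
  linarith

theorem MeasureTheory.SimpleFunc.exists_eq_of_mem_biUnion {α β ι : Type*} [MeasurableSpace α]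
    [Nonempty β] (s : Finset ι) {U : ι → Set α} (hU : ∀ i, MeasurableSet (U i)) (b : ι → β) :
    ∃ F : SimpleFunc α β, ∀ x ∈ ⋃ i ∈ s, U i, ∃ i ∈ s, x ∈ U i ∧ F x = b i := by
  classical
  induction s using Finset.induction_on with
  | empty => exact ⟨SimpleFunc.const α (Classical.arbitrary β), by simp⟩
  | insert a s _ ih =>
    obtain ⟨F, hF⟩ := ih
    refine ⟨SimpleFunc.piecewise (U a) (hU a) (SimpleFunc.const α (b a)) F, fun x hx => ?_⟩
    by_cases hxa : x ∈ U a
    · exact ⟨a, mem_insert_self a s, hxa, by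
        simp only [SimpleFunc.piecewise_apply, if_pos hxa, SimpleFunc.const_apply]⟩
    · have hxs : x ∈ ⋃ i ∈ s, U i := by simpa [hxa] using hx
      obtain ⟨i, hi, hxi, hFx⟩ := hF x hxs
      exact ⟨i, mem_insert_of_mem hi, hxi, by
        simp only [SimpleFunc.piecewise_apply, if_neg hxa, hFx]⟩

theorem ConvexOn.exists_simpleFunc_affine_le_and_lt_add [MeasurableSpace E]
    [OpensMeasurableSpace E] (hKcl : IsClosed K) (hf_conv : ConvexOn ℝ K f)
    (hf_cont : ContinuousOn f K) {C : Set E} (hC : IsCompact C) (hCK : C ⊆ K) {δ : ℝ}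
    (hδ : 0 < δ) :
    ∃ F : SimpleFunc E ((E →L[ℝ] ℝ) × ℝ), ∀ y ∈ C,
      (∀ z ∈ K, (F y).1 z + (F y).2 ≤ f z) ∧ f y < (F y).1 y + (F y).2 + δ := by
  choose p hp U hU hyU hUf using fun y : C =>
    hf_conv.exists_affine_le_and_lt_add_nhds hKcl hf_cont (hCK y.2) hδ
  obtain ⟨t, hCt⟩ := hC.elim_nhds_subcover' (fun y hy => U ⟨y, hy⟩)
    fun y hy => (hU _).mem_nhds (hyU _)
  obtain ⟨F, hF⟩ := SimpleFunc.exists_eq_of_mem_biUnion t (fun y => (hU y).measurableSet) p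
  refine ⟨F, fun y hy => ?_⟩
  obtain ⟨z, -, hyz, hFy⟩ := hF y (by simpa using hCt hy)
  rw [hFy]
  exact ⟨hp z, hUf z y ⟨hyz, hCK hy⟩⟩

end AffineMinorants

theorem ContinuousLinearMap.apply_eq_sum_mul_single {ι : Type*} [Fintype ι] [DecidableEq ι]
    (l : (ι → ℝ) →L[ℝ] ℝ) (y : ι → ℝ) : l y = ∑ j, y j * l (Pi.single j 1) := by
  conv_lhs => rw [← Finset.univ_sum_single y]
  simp only [map_sum]
  refine Finset.sum_congr rfl fun j _ => ?_
  rw [← smul_eq_mul, ← map_smul]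
  congr 1
  ext k
  simp [Pi.single_apply]

section WeakStar

variable {α ι : Type*} [MeasurableSpace α] {μ : Measure α} [IsFiniteMeasure μ]

theorem integrable_mul_simpleFunc_apply_single [DecidableEq ι]
    (A : SimpleFunc α ((ι → ℝ) →L[ℝ] ℝ)) {w : α → ι → ℝ}
    (hw : ∀ j, MemLp (fun x => w x j) ∞ μ) (j : ι) :
    Integrable (fun x => w x j * A x (Pi.single j 1)) μ :=
  ((A.map fun l => l (Pi.single j 1)).integrable_of_isFiniteMeasure).mul_of_top_right (hw j)

theorem integrable_simpleFunc_apply [Fintype ι] (A : SimpleFunc α ((ι → ℝ) →L[ℝ] ℝ))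
    {w : α → ι → ℝ} (hw : ∀ j, MemLp (fun x => w x j) ∞ μ) :
    Integrable (fun x => A x (w x)) μ := by
  classical
  exact (integrable_finsetSum _ fun j _ => integrable_mul_simpleFunc_apply_single A hw j).congr
    (.of_forall fun x => by simpa using ((A x).apply_eq_sum_mul_single (w x)).symm)

theorem integral_simpleFunc_apply [Fintype ι] [DecidableEq ι]
    (A : SimpleFunc α ((ι → ℝ) →L[ℝ] ℝ)) {w : α → ι → ℝ}
    (hw : ∀ j, MemLp (fun x => w x j) ∞ μ) :
    ∫ x, A x (w x) ∂μ = ∑ j, ∫ x, w x j * A x (Pi.single j 1) ∂μ := by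
  rw [← integral_finsetSum _ fun j _ => integrable_mul_simpleFunc_apply_single A hw j]
  exact integral_congr_ae (.of_forall fun x => (A x).apply_eq_sum_mul_single (w x))

theorem tendsto_integral_simpleFunc_apply [Fintype ι] (A : SimpleFunc α ((ι → ℝ) →L[ℝ] ℝ))
    {u : ℕ → α → ι → ℝ} {v : α → ι → ℝ} (hu : ∀ i j, MemLp (fun x => u i x j) ∞ μ)
    (hv : ∀ j, MemLp (fun x => v x j) ∞ μ)
    (hweak : ∀ j, ∀ w : α → ℝ, Integrable w μ →
      Tendsto (fun i => ∫ x, u i x j * w x ∂μ) atTop (𝓝 (∫ x, v x j * w x ∂μ))) :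
    Tendsto (fun i => ∫ x, A x (u i x) ∂μ) atTop (𝓝 (∫ x, A x (v x) ∂μ)) := by
  classical
  simp_rw [integral_simpleFunc_apply A (hu _), integral_simpleFunc_apply A hv]
  exact tendsto_finsetSum _ fun j _ =>
    hweak j _ (A.map fun l : (ι → ℝ) →L[ℝ] ℝ => l (Pi.single j 1)).integrable_of_isFiniteMeasure

theorem ae_abs_le_of_forall_abs_setIntegral_le {g : α → ℝ} (hg : Integrable g μ) {C : ℝ}
    (h : ∀ s, MeasurableSet s → |∫ x in s, g x ∂μ| ≤ C * μ.real s) : ∀ᵐ x ∂μ, |g x| ≤ C := by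
  have hle : ∀ s, MeasurableSet s → μ s < ∞ → |∫ x in s, g x ∂μ| ≤ ∫ _ in s, C ∂μ :=
    fun s hs _ => by rw [setIntegral_const, smul_eq_mul, mul_comm]; exact h s hs
  have hupper := ae_le_of_forall_setIntegral_le hg (integrable_const C)
    fun s hs hμs => (le_abs_self _).trans (hle s hs hμs)
  have hlower := ae_le_of_forall_setIntegral_le hg.neg (integrable_const C)
    fun s hs hμs => by
      simp only [Pi.neg_apply, integral_neg]
      exact (neg_le_abs _).trans (hle s hs hμs)
  filter_upwards [hupper, hlower] with x hx hx'
  exact abs_le.2 ⟨by simp only [Pi.neg_apply] at hx'; linarith, hx⟩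

theorem exists_forall_ae_abs_le_of_tendsto_integral_mul {g : ℕ → α → ℝ}
    (hg : ∀ i, MemLp (g i) ∞ μ)
    (hlim : ∀ w : α → ℝ, Integrable w μ → ∃ c, Tendsto (fun i => ∫ x, g i x * w x ∂μ) atTop (𝓝 c)) :
    ∃ C, ∀ i, ∀ᵐ x ∂μ, |g i x| ≤ C := by
  let T i := ContinuousLinearMap.lpPairing μ ∞ 1 (ContinuousLinearMap.mul ℝ ℝ) ((hg i).toLp (g i))
  have hT : ∀ i (w : Lp ℝ 1 μ), T i w = ∫ x, g i x * w x ∂μ := fun i w => by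
    rw [ContinuousLinearMap.lpPairing_eq_integral]
    refine integral_congr_ae ?_
    filter_upwards [(hg i).coeFn_toLp] with x hx
    simp [hx]
  obtain ⟨C, hC⟩ := banach_steinhaus fun w : Lp ℝ 1 μ => by
    obtain ⟨c, hc⟩ := hlim w (L1.integrable_coeFn w)
    obtain ⟨C, hC⟩ := hc.norm.bddAbove_range
    exact ⟨C, fun i => by rw [hT]; exact hC ⟨i, rfl⟩⟩
  refine ⟨C, fun i => ae_abs_le_of_forall_abs_setIntegral_le ((hg i).integrable le_top)
    fun s hs => ?_⟩
  let χ := indicatorConstLp 1 hs (measure_ne_top μ s) (1 : ℝ)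
  have hχ : T i χ = ∫ x in s, g i x ∂μ := by
    rw [hT, ← integral_indicator hs]
    refine integral_congr_ae ?_
    filter_upwards [indicatorConstLp_coeFn (p := 1) (hs := hs) (hμs := measure_ne_top μ s)
      (c := (1 : ℝ))] with x hx
    by_cases hxs : x ∈ s <;> simp [χ, hx, hxs]
  calc |∫ x in s, g i x ∂μ| = ‖T i χ‖ := by rw [hχ, Real.norm_eq_abs]
    _ ≤ ‖T i‖ * ‖χ‖ := (T i).le_opNorm χ
    _ ≤ C * μ.real s := by
      rw [norm_indicatorConstLp one_ne_zero one_ne_top]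
      simp only [norm_one, one_mul, toReal_one, div_one, Real.rpow_one]
      exact mul_le_mul_of_nonneg_right (hC i) measureReal_nonneg

end WeakStar

section Composition

variable {α E : Type*} [MeasurableSpace α] {μ : Measure α} [TopologicalSpace E] [MeasurableSpace E]
  [OpensMeasurableSpace E] {K : Set E} {f : E → ℝ} {w : α → E}

theorem ContinuousOn.aemeasurable_comp (hf : ContinuousOn f K) (hw : AEMeasurable w μ)
    (hwK : ∀ x, w x ∈ K) : AEMeasurable (fun x => f (w x)) μ :=
  hf.domRestrict.measurable.comp_aemeasurable (hw.subtype_mk (hfs := hwK))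

theorem ContinuousOn.integrable_comp [IsFiniteMeasure μ] (hf : ContinuousOn f K) {C : Set E}
    (hC : IsCompact C) (hCK : C ⊆ K) (hw : AEMeasurable w μ) (hwK : ∀ x, w x ∈ K)
    (hwC : ∀ᵐ x ∂μ, w x ∈ C) : Integrable (fun x => f (w x)) μ := by
  obtain ⟨M, hM⟩ := hC.exists_bound_of_continuousOn (hf.mono hCK)
  exact .of_bound (hf.aemeasurable_comp hw hwK).aestronglyMeasurable M
    (hwC.mono fun x hx => hM _ hx)

end Composition

section LowerSemicontinuity

variable {α ι : Type*} [MeasurableSpace α] {μ : Measure α} [IsFiniteMeasure μ] [Fintype ι]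
  {K : Set (ι → ℝ)} {f : (ι → ℝ) → ℝ} {u : ℕ → α → ι → ℝ} {v : α → ι → ℝ}

theorem ConvexOn.integral_comp_le_liminf_add (hKcl : IsClosed K) (hf_conv : ConvexOn ℝ K f)
    (hf_cont : ContinuousOn f K) {C : Set (ι → ℝ)} (hC : IsCompact C) (hCK : C ⊆ K)
    (huK : ∀ i x, u i x ∈ K) (hvK : ∀ x, v x ∈ K)
    (huC : ∀ i, ∀ᵐ x ∂μ, u i x ∈ C) (hvC : ∀ᵐ x ∂μ, v x ∈ C)
    (hu : ∀ i j, MemLp (fun x => u i x j) ∞ μ) (hv : ∀ j, MemLp (fun x => v x j) ∞ μ)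
    (hweak : ∀ j, ∀ w : α → ℝ, Integrable w μ →
      Tendsto (fun i => ∫ x, u i x j * w x ∂μ) atTop (𝓝 (∫ x, v x j * w x ∂μ)))
    (hbdd : IsCoboundedUnder (· ≥ ·) atTop fun i => ∫ x, f (u i x) ∂μ) {δ : ℝ} (hδ : 0 < δ) :
    ∫ x, f (v x) ∂μ ≤ liminf (fun i => ∫ x, f (u i x) ∂μ) atTop + δ * μ.real Set.univ := by
  classical
  obtain ⟨F, hF⟩ := hf_conv.exists_simpleFunc_affine_le_and_lt_add hKcl hf_cont hC hCK hδ
  have hmeas : ∀ w : α → ι → ℝ, (∀ j, MemLp (fun x => w x j) ∞ μ) → AEMeasurable w μ :=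
    fun w hw => aemeasurable_pi_lambda _ fun j => (hw j).aestronglyMeasurable.aemeasurable
  have hvm := hmeas v hv
  let A := F.comp (hvm.mk v) hvm.measurable_mk
  have hAv : ∀ᵐ x ∂μ, A x = F (v x) := hvm.ae_eq_mk.mono fun x hx => by simp [A, hx]
  let L : (α → ι → ℝ) → ℝ := fun w => ∫ x, (A x).1 (w x) + (A x).2 ∂μ
  have hL : ∀ w : α → ι → ℝ, (∀ j, MemLp (fun x => w x j) ∞ μ) →
      Integrable (fun x => (A x).1 (w x) + (A x).2) μ ∧
        L w = ∫ x, (A.map Prod.fst) x (w x) ∂μ + ∫ x, (A.map Prod.snd) x ∂μ := fun w hw => by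
    have h1 := integrable_simpleFunc_apply (A.map Prod.fst) hw
    exact ⟨h1.add (A.map Prod.snd).integrable_of_isFiniteMeasure,
      integral_add h1 (A.map Prod.snd).integrable_of_isFiniteMeasure⟩
  have hlow : ∀ i, L (u i) ≤ ∫ x, f (u i x) ∂μ := fun i =>
    integral_mono_ae (hL (u i) (hu i)).1
      (hf_cont.integrable_comp hC hCK (hmeas _ (hu i)) (huK i) (huC i)) <| by
      filter_upwards [hAv, hvC] with x hx hxC
      rw [hx]
      exact (hF _ hxC).1 _ (huK i x)
  have hup : ∫ x, f (v x) ∂μ ≤ L v + δ * μ.real Set.univ := calc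
    ∫ x, f (v x) ∂μ ≤ ∫ x, ((A x).1 (v x) + (A x).2 + δ) ∂μ := by
      refine integral_mono_ae (hf_cont.integrable_comp hC hCK hvm hvK hvC)
        ((hL v hv).1.add (integrable_const δ)) ?_
      filter_upwards [hAv, hvC] with x hx hxC
      rw [hx]
      exact (hF _ hxC).2.le
    _ = L v + δ * μ.real Set.univ := by
      rw [integral_add (hL v hv).1 (integrable_const δ), integral_const, smul_eq_mul, mul_comm]
  have hlim : Tendsto (fun i => L (u i)) atTop (𝓝 (L v)) := by
    simp only [fun i => (hL (u i) (hu i)).2, (hL v hv).2]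
    exact (tendsto_integral_simpleFunc_apply (A.map Prod.fst) hu hv hweak).add_const _
  calc ∫ x, f (v x) ∂μ ≤ L v + δ * μ.real Set.univ := hup
    _ ≤ liminf (fun i => ∫ x, f (u i x) ∂μ) atTop + δ * μ.real Set.univ := by
      gcongr
      exact hlim.liminf_eq ▸ liminf_le_liminf (.of_forall hlow) hlim.isBoundedUnder_ge hbdd

theorem ConvexOn.integral_comp_le_liminf_of_tendsto (hKcl : IsClosed K)
    (hf_conv : ConvexOn ℝ K f) (hf_cont : ContinuousOn f K)
    (huK : ∀ i x, u i x ∈ K) (hvK : ∀ x, v x ∈ K)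
    (hu : ∀ i j, MemLp (fun x => u i x j) ∞ μ) (hv : ∀ j, MemLp (fun x => v x j) ∞ μ)
    (hweak : ∀ j, ∀ w : α → ℝ, Integrable w μ →
      Tendsto (fun i => ∫ x, u i x j * w x ∂μ) atTop (𝓝 (∫ x, v x j * w x ∂μ))) :
    ∫ x, f (v x) ∂μ ≤ liminf (fun i => ∫ x, f (u i x) ∂μ) atTop := by
  choose Cu hCu using fun j =>
    exists_forall_ae_abs_le_of_tendsto_integral_mul (fun i => hu i j) fun w hw => ⟨_, hweak j w hw⟩
  let R j := max (Cu j) (lpNorm (fun x => v x j) ∞ μ)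
  let C := K ∩ Set.univ.pi fun j => Set.Icc (-R j) (R j)
  have hC : IsCompact C := (isCompact_univ_pi fun j => isCompact_Icc).inter_left hKcl
  have huC : ∀ i, ∀ᵐ x ∂μ, u i x ∈ C := fun i =>
    (ae_all_iff.2 fun j => hCu j i).mono fun x hx =>
      ⟨huK i x, fun j _ => abs_le.1 ((hx j).trans (le_max_left _ _))⟩
  have hvC : ∀ᵐ x ∂μ, v x ∈ C :=
    (ae_all_iff.2 fun j => ae_le_lpNorm_exponent_top (hv j)).mono fun x hx =>
      ⟨hvK x, fun j _ => abs_le.1 ((hx j).trans (le_max_right _ _))⟩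
  obtain ⟨M, hM⟩ := hC.exists_bound_of_continuousOn (hf_cont.mono Set.inter_subset_left)
  have hbdd : IsCoboundedUnder (· ≥ ·) atTop fun i => ∫ x, f (u i x) ∂μ :=
    isCoboundedUnder_ge_of_le atTop (x := M * μ.real Set.univ) fun i => (le_abs_self _).trans
      (norm_integral_le_of_norm_le_const ((huC i).mono fun x hx => hM _ hx))
  refine le_of_forall_pos_le_add fun ε hε => ?_
  have hμ : 0 ≤ μ.real Set.univ := measureReal_nonneg
  calc ∫ x, f (v x) ∂μ
      ≤ liminf (fun i => ∫ x, f (u i x) ∂μ) atTop + ε / (μ.real Set.univ + 1) * μ.real Set.univ :=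
        hf_conv.integral_comp_le_liminf_add hKcl hf_cont hC Set.inter_subset_left huK hvK huC hvC
          hu hv hweak hbdd (by positivity)
    _ ≤ liminf (fun i => ∫ x, f (u i x) ∂μ) atTop + ε := by
      gcongr
      rw [div_mul_eq_mul_div, div_le_iff₀ (by positivity)]
      nlinarith

end LowerSemicontinuity

theorem stmt_13_general (n m : ℕ) (μ : Measure (Fin n → ℝ))
    (K : Set (Fin m → ℝ)) (hKcl : IsClosed K)
    (f : (Fin m → ℝ) → ℝ)
    (hf_conv : ConvexOn ℝ K f) (hf_cont : ContinuousOn f K)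
    (u : ℕ → (Fin n → ℝ) → (Fin m → ℝ)) (v : (Fin n → ℝ) → (Fin m → ℝ))
    (huK : ∀ i x, u i x ∈ K) (hvK : ∀ x, v x ∈ K)
    (hu : ∀ i j, MemLp (fun x => u i x j) ⊤ μ)
    (hv : ∀ j, MemLp (fun x => v x j) ⊤ μ)
    (hweak : ∀ j, ∀ w : (Fin n → ℝ) → ℝ, Integrable w μ →
      Tendsto (fun i => ∫ x, u i x j * w x ∂μ) atTop (𝓝 (∫ x, v x j * w x ∂μ)))
    (Ω : Set (Fin n → ℝ)) (hΩ : MeasurableSet Ω)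
    (hΩfin : μ Ω < ⊤) :
    ∫ x in Ω, f (v x) ∂μ ≤
      Filter.liminf (fun i => ∫ x in Ω, f (u i x) ∂μ) atTop := by
  have : IsFiniteMeasure (μ.restrict Ω) := isFiniteMeasure_restrict.2 hΩfin.ne
  refine hf_conv.integral_comp_le_liminf_of_tendsto hKcl hf_cont huK hvK
    (fun i j => (hu i j).restrict Ω) (fun j => (hv j).restrict Ω) fun j w hw => ?_
  simpa only [← integral_indicator hΩ, Set.indicator_mul_right] using
    hweak j _ (IntegrableOn.integrable_indicator hw hΩ)

/-- Theorem 5 of the paper: for a (not necessarily nonnegative) continuous convex function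
`f` on a closed convex set `K ⊆ ℝ^m`, weak* convergence `u_i → u` in `(L^∞(μ))^m` gives
`liminf ∫_Ω f(u_i) dμ ≥ ∫_Ω f(u) dμ` for every bounded measurable `Ω` of finite measure. -/
theorem stmt_13 (n m : ℕ) (μ : Measure (Fin n → ℝ))
    (K : Set (Fin m → ℝ)) (hK : Convex ℝ K) (hKcl : IsClosed K)
    (f : (Fin m → ℝ) → ℝ)
    (hf_conv : ConvexOn ℝ K f) (hf_cont : ContinuousOn f K)
    (u : ℕ → (Fin n → ℝ) → (Fin m → ℝ)) (v : (Fin n → ℝ) → (Fin m → ℝ))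
    (huK : ∀ i x, u i x ∈ K) (hvK : ∀ x, v x ∈ K)
    (hu : ∀ i j, MemLp (fun x => u i x j) ⊤ μ)
    (hv : ∀ j, MemLp (fun x => v x j) ⊤ μ)
    (hweak : ∀ j, ∀ w : (Fin n → ℝ) → ℝ, Integrable w μ →
      Tendsto (fun i => ∫ x, u i x j * w x ∂μ) atTop (𝓝 (∫ x, v x j * w x ∂μ)))
    (Ω : Set (Fin n → ℝ)) (hΩ : MeasurableSet Ω)
    (hΩbd : Bornology.IsBounded Ω) (hΩfin : μ Ω < ⊤) :
    ∫ x in Ω, f (v x) ∂μ ≤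
      Filter.liminf (fun i => ∫ x in Ω, f (u i x) ∂μ) atTop :=
  stmt_13_general n m μ K hKcl f hf_conv hf_cont u v huK hvK hu hv hweak Ω hΩ hΩfin
end
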